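/- arXiv:1010.3194 — 6 statements merged into one kernel-verified Lean document; each statement's English description precedes it below -/
import Mathlib

section
/- Let I be a squarefree monomial ideal of S and let L be its squarefree lexification. Then L ⊆ (x_1) if and only if I ⊆ (x_i) for some variable x_i. -/
open MvPolynomial

/-- `m₁·W`: the `k`-span of `{xᵢ·w : 1 ≤ i ≤ n, w ∈ W}`. -/
noncomputable def mulVars (k : Type*) [Field k] {n : ℕ}
    (W : Submodule k (MvPolynomial (Fin n) k)) : Submodule k (MvPolynomial (Fin n) k) :=
  Submodule.span k {p : MvPolynomial (Fin n) k | ∃ i : Fin n, ∃ w ∈ W, p = X i * w}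

/-- A subspace `V ⊆ S_d` is Gotzmann if `dim m₁·V ≤ dim m₁·W` for every subspace
`W ⊆ S_d` with `dim W = dim V`. -/
def IsGotzmannSubspace (k : Type*) [Field k] (n d : ℕ)
    (V : Submodule k (MvPolynomial (Fin n) k)) : Prop :=
  V ≤ homogeneousSubmodule (Fin n) k d ∧
    ∀ W : Submodule k (MvPolynomial (Fin n) k),
      W ≤ homogeneousSubmodule (Fin n) k d →
      Module.finrank k W = Module.finrank k V →
      Module.finrank k (mulVars k V) ≤ Module.finrank k (mulVars k W)

/-- The degree-`d` component `I_d` of an ideal, as a `k`-subspace of `S_d`. -/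
noncomputable def idealComponent (k : Type*) [Field k] {n : ℕ}
    (I : Ideal (MvPolynomial (Fin n) k)) (d : ℕ) : Submodule k (MvPolynomial (Fin n) k) :=
  Submodule.restrictScalars k I ⊓ homogeneousSubmodule (Fin n) k d

/-- An ideal is Gotzmann if all of its graded components are Gotzmann subspaces. -/
def IsGotzmannIdeal {k : Type*} [Field k] {n : ℕ}
    (I : Ideal (MvPolynomial (Fin n) k)) : Prop :=
  ∀ d : ℕ, IsGotzmannSubspace k n d (idealComponent k I d)

/-- The squarefree monomial `∏_{i ∈ A} xᵢ` with support `A`. -/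
noncomputable def sqMonomial (k : Type*) [Field k] {n : ℕ} (A : Finset (Fin n)) :
    MvPolynomial (Fin n) k :=
  ∏ i ∈ A, X i

/-- A squarefree monomial ideal: an ideal generated by squarefree monomials
(equivalently, a monomial ideal whose minimal monomial generators are squarefree). -/
def IsSquarefreeMonomialIdeal {k : Type*} [Field k] {n : ℕ}
    (I : Ideal (MvPolynomial (Fin n) k)) : Prop :=
  ∃ G : Set (Finset (Fin n)), I = Ideal.span (sqMonomial k '' G)

/-- Lex comparison of exponent vectors with `x₁ > x₂ > ⋯ > xₙ`: `s` is lex-smaller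
than `t` iff at the first index where they differ, `s` has the smaller exponent. -/
def expLexLT {n : ℕ} (s t : Fin n →₀ ℕ) : Prop :=
  ∃ i : Fin n, (∀ j : Fin n, j < i → s j = t j) ∧ s i < t i

/-- A lex segment in `S_d`: the span of a set of degree-`d` monomials which is closed
under passing to lex-larger degree-`d` monomials. -/
def IsLexSegment (k : Type*) [Field k] {n : ℕ} (d : ℕ)
    (L : Submodule k (MvPolynomial (Fin n) k)) : Prop :=
  ∃ B : Set (Fin n →₀ ℕ),
    (∀ s ∈ B, (s.sum fun _ e => e) = d) ∧
    (∀ s ∈ B, ∀ t : Fin n →₀ ℕ, (t.sum fun _ e => e) = d → expLexLT s t → t ∈ B) ∧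
    L = Submodule.span k ((fun s => (monomial s (1 : k) : MvPolynomial (Fin n) k)) '' B)

/-- A monomial vector space: a subspace of `S_d` spanned by monomials of degree `d`. -/
def IsMonomialSubspace (k : Type*) [Field k] {n : ℕ} (d : ℕ)
    (V : Submodule k (MvPolynomial (Fin n) k)) : Prop :=
  ∃ B : Set (Fin n →₀ ℕ),
    (∀ s ∈ B, (s.sum fun _ e => e) = d) ∧
    V = Submodule.span k ((fun s => (monomial s (1 : k) : MvPolynomial (Fin n) k)) '' B)

/-- A homogeneous ideal: one containing all homogeneous components of its elements. -/
def IsHomogeneousIdeal {k : Type*} [Field k] {n : ℕ}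
    (I : Ideal (MvPolynomial (Fin n) k)) : Prop :=
  ∀ p ∈ I, ∀ d : ℕ, (homogeneousComponent d p) ∈ I

/-- A lex ideal: each graded component is a lex segment. -/
def IsLexIdeal (k : Type*) [Field k] {n : ℕ}
    (I : Ideal (MvPolynomial (Fin n) k)) : Prop :=
  ∀ d : ℕ, IsLexSegment k d (idealComponent k I d)

/-- `A` lex-precedes `B`, as squarefree monomials with `x₁ > x₂ > ⋯ > xₙ`: the
least element of the symmetric difference `A Δ B` lies in `A`. -/
def finsetLexLT {n : ℕ} (A B : Finset (Fin n)) : Prop :=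
  ∃ i ∈ A, i ∉ B ∧ ∀ j : Fin n, j < i → (j ∈ A ↔ j ∈ B)

/-- `L` is the squarefree lexification of `I`: `L` is a squarefree monomial ideal and,
in each degree `d`, the squarefree degree-`d` monomials in `L` form an initial segment
in lex order whose cardinality is the number of squarefree degree-`d` monomials in `I`. -/
def IsSquarefreeLexification (k : Type*) [Field k] {n : ℕ}
    (I L : Ideal (MvPolynomial (Fin n) k)) : Prop :=
  IsSquarefreeMonomialIdeal L ∧
    ∀ d : ℕ,
      (∀ B : Finset (Fin n), B.card = d → sqMonomial k B ∈ L →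
        ∀ A : Finset (Fin n), A.card = d → finsetLexLT A B → sqMonomial k A ∈ L) ∧
      {A : Finset (Fin n) | A.card = d ∧ sqMonomial k A ∈ L}.ncard
        = {A : Finset (Fin n) | A.card = d ∧ sqMonomial k A ∈ I}.ncard

/-- `A` is the support of a minimal monomial generator of the squarefree monomial
ideal `I`: the monomial `x_A` lies in `I` but no proper divisor of it does. -/
def IsMinimalSqGenerator {k : Type*} [Field k] {n : ℕ}
    (I : Ideal (MvPolynomial (Fin n) k)) (A : Finset (Fin n)) : Prop :=
  sqMonomial k A ∈ I ∧ ∀ B : Finset (Fin n), B ⊂ A → sqMonomial k B ∉ I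

/-! If `I ⊆ (xᵢ)`, then in each degree `d` the squarefree monomials of `I` are at most as many
as the squarefree monomials of degree `d` divisible by `xᵢ`, hence by `x₁`; these form the
initial lex segment of degree `d`, so a squarefree generator of `L` outside `(x₁)` would make
`L` strictly larger than `I` in its degree. Conversely, if `I ⊄ (xᵢ)` for every `i`, some
squarefree generator of `I` avoids `xᵢ` and so divides `x_{[n] ∖ i}`: then `I`, and hence `L`,
contains all squarefree monomials of degree `n - 1`, among them `x₂ ⋯ xₙ ∉ (x₁)`. -/

theorem Set.ncard_setOf_card_eq_and_mem_eq {α : Type*} [DecidableEq α] (d : ℕ) (i j : α) :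
    {B : Finset α | B.card = d ∧ i ∈ B}.ncard =
      {B : Finset α | B.card = d ∧ j ∈ B}.ncard := by
  let e := Equiv.finsetCongr (Equiv.swap i j)
  rw [← Set.ncard_image_of_injective _ e.injective, e.image_eq_preimage_symm]
  congr 1
  ext B
  simp [e]

theorem finsetLexLT_of_zero_mem {n : ℕ} (hn : 0 < n) {A B : Finset (Fin n)}
    (hA : (⟨0, hn⟩ : Fin n) ∈ A) (hB : (⟨0, hn⟩ : Fin n) ∉ B) : finsetLexLT A B :=
  ⟨_, hA, hB, fun _ hj => (Nat.not_lt_zero _ hj).elim⟩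

section

variable {k : Type*} [Field k] {n : ℕ}

theorem sqMonomial_mem_span_X_iff {A : Finset (Fin n)} {i : Fin n} :
    sqMonomial k A ∈ Ideal.span {(X i : MvPolynomial (Fin n) k)} ↔ i ∈ A := by
  refine ⟨fun h => ?_, fun h => Ideal.mem_span_singleton.2 (Finset.dvd_prod_of_mem _ h)⟩
  by_contra hi
  obtain ⟨q, hq⟩ := Ideal.mem_span_singleton.1 h
  have := congrArg (eval (fun j => if j = i then (0 : k) else 1)) hq
  rw [sqMonomial, eval_prod, eval_mul, eval_X, if_pos rfl, zero_mul,
    Finset.prod_eq_one fun j hj => by rw [eval_X, if_neg (ne_of_mem_of_not_mem hj hi)]] at this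
  exact one_ne_zero this

theorem IsSquarefreeMonomialIdeal.exists_sqMonomial_mem_of_not_le_span_X
    {I : Ideal (MvPolynomial (Fin n) k)} (hI : IsSquarefreeMonomialIdeal I) {i : Fin n}
    (h : ¬ I ≤ Ideal.span {(X i : MvPolynomial (Fin n) k)}) :
    ∃ A : Finset (Fin n), sqMonomial k A ∈ I ∧ i ∉ A := by
  obtain ⟨G, rfl⟩ := hI
  contrapose! h
  rw [Ideal.span_le]
  rintro _ ⟨A, hA, rfl⟩
  exact sqMonomial_mem_span_X_iff.2 (h A (Ideal.subset_span ⟨A, hA, rfl⟩))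

theorem IsSquarefreeMonomialIdeal.sqMonomial_mem_of_card_eq_sub_one (hn : 0 < n)
    {I : Ideal (MvPolynomial (Fin n) k)} (hI : IsSquarefreeMonomialIdeal I)
    (h : ∀ i : Fin n, ¬ I ≤ Ideal.span {(X i : MvPolynomial (Fin n) k)})
    {A : Finset (Fin n)} (hA : A.card = n - 1) : sqMonomial k A ∈ I := by
  obtain ⟨i, -, hi⟩ := Finset.exists_mem_notMem_of_card_lt_card (s := A) (t := Finset.univ)
    (by rw [Finset.card_univ, Fintype.card_fin]; omega)
  have hA_eq : A = Finset.univ.erase i := Finset.eq_of_subset_of_card_le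
    (Finset.subset_erase.2 ⟨Finset.subset_univ A, hi⟩)
    (by rw [Finset.card_erase_of_mem (Finset.mem_univ i), Finset.card_univ, Fintype.card_fin, hA])
  obtain ⟨C, hCI, hiC⟩ := hI.exists_sqMonomial_mem_of_not_le_span_X (h i)
  have hCA : C ⊆ A := hA_eq ▸ Finset.subset_erase.2 ⟨Finset.subset_univ C, hiC⟩
  exact I.mem_of_dvd (Finset.prod_dvd_prod_of_subset C A X hCA) hCI

def sqSupports (k : Type*) [Field k] {n : ℕ} (I : Ideal (MvPolynomial (Fin n) k)) (d : ℕ) :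
    Set (Finset (Fin n)) :=
  {A | A.card = d ∧ sqMonomial k A ∈ I}

namespace IsSquarefreeLexification

variable {I L : Ideal (MvPolynomial (Fin n) k)} (hlex : IsSquarefreeLexification k I L)
include hlex

theorem ncard_sqSupports_eq (d : ℕ) : (sqSupports k L d).ncard = (sqSupports k I d).ncard :=
  (hlex.2 d).2

theorem sqSupports_eq_setOf_card {d : ℕ} (hI : sqSupports k I d = {A | A.card = d}) :
    sqSupports k L d = {A | A.card = d} :=
  Set.eq_of_subset_of_ncard_le (fun _ hA => hA.1) (by rw [hlex.ncard_sqSupports_eq, hI])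

theorem ncard_lt_ncard_sqSupports (hn : 0 < n) {A : Finset (Fin n)} (hAL : sqMonomial k A ∈ L)
    (hA : (⟨0, hn⟩ : Fin n) ∉ A) :
    {B : Finset (Fin n) | B.card = A.card ∧ ⟨0, hn⟩ ∈ B}.ncard <
      (sqSupports k L A.card).ncard := by
  have hsub : insert A {B : Finset (Fin n) | B.card = A.card ∧ ⟨0, hn⟩ ∈ B} ⊆
      sqSupports k L A.card := by
    rintro B (rfl | ⟨hB, h0B⟩)
    · exact ⟨rfl, hAL⟩
    · exact ⟨hB, (hlex.2 _).1 A rfl hAL B hB (finsetLexLT_of_zero_mem hn h0B hA)⟩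
  calc _ < (insert A {B : Finset (Fin n) | B.card = A.card ∧ ⟨0, hn⟩ ∈ B}).ncard :=
        Set.ncard_lt_ncard (Set.ssubset_insert fun h => hA h.2)
    _ ≤ _ := Set.ncard_le_ncard hsub

theorem le_span_X_zero (hn : 0 < n) {i : Fin n}
    (hI : I ≤ Ideal.span {(X i : MvPolynomial (Fin n) k)}) :
    L ≤ Ideal.span {(X (⟨0, hn⟩ : Fin n) : MvPolynomial (Fin n) k)} := by
  obtain ⟨G, hG⟩ := hlex.1
  rw [hG, Ideal.span_le]
  rintro _ ⟨A, hA, rfl⟩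
  by_contra h0
  have hAL : sqMonomial k A ∈ L := hG ▸ Ideal.subset_span ⟨A, hA, rfl⟩
  have hIi : sqSupports k I A.card ⊆ {B | B.card = A.card ∧ i ∈ B} :=
    fun B hB => ⟨hB.1, sqMonomial_mem_span_X_iff.1 (hI hB.2)⟩
  have := hlex.ncard_lt_ncard_sqSupports hn hAL (mt sqMonomial_mem_span_X_iff.2 h0)
  rw [hlex.ncard_sqSupports_eq, Set.ncard_setOf_card_eq_and_mem_eq _ _ i] at this
  exact (Set.ncard_le_ncard hIi).not_gt this

end IsSquarefreeLexification

end

/-- **Lemma.** Let `I` be a squarefree monomial ideal of `S` and `L` its squarefree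
lexification.  Then `L ⊆ (x₁)` if and only if `I ⊆ (xᵢ)` for some variable `xᵢ`. -/
theorem sqfLexification_le_x1_iff {k : Type*} [Field k] {n : ℕ} (hn : 0 < n)
    (I L : Ideal (MvPolynomial (Fin n) k))
    (hsf : IsSquarefreeMonomialIdeal I) (hlex : IsSquarefreeLexification k I L) :
    L ≤ Ideal.span {(X (⟨0, hn⟩ : Fin n) : MvPolynomial (Fin n) k)} ↔
      ∃ i : Fin n, I ≤ Ideal.span {(X i : MvPolynomial (Fin n) k)} := by
  refine ⟨fun hL => ?_, fun ⟨i, hI⟩ => hlex.le_span_X_zero hn hI⟩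
  by_contra! hI
  have hIfull : sqSupports k I (n - 1) = {A | A.card = n - 1} :=
    Set.Subset.antisymm (fun _ hA => hA.1)
      fun _ hA => ⟨hA, hsf.sqMonomial_mem_of_card_eq_sub_one hn hI hA⟩
  have hmem : Finset.univ.erase ⟨0, hn⟩ ∈ sqSupports k L (n - 1) := by
    rw [hlex.sqSupports_eq_setOf_card hIfull, Set.mem_ofPred_eq,
      Finset.card_erase_of_mem (Finset.mem_univ _), Finset.card_univ, Fintype.card_fin]
  exact Finset.notMem_erase _ _ (sqMonomial_mem_span_X_iff.1 (hL hmem.2))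
end

section
/- Let I be a Gotzmann squarefree monomial ideal of S with I ⊆ (x_i) for some variable x_i. Then the colon ideal (I : x_i) = {f ∈ S : x_i·f ∈ I} — equivalently, the ideal generated by m/x_i as m ranges over the minimal monomial generators of I — is a Gotzmann squarefree monomial ideal of S. -/
open MvPolynomial

/-!
Because `I ⊆ (xᵢ)`, multiplication by the nonzerodivisor `xᵢ` is a degree-raising linear
isomorphism from `(I : xᵢ)_d` onto `I_{d+1}`; it preserves dimensions and commutes with
`W ↦ m₁·W`, so any competitor `W` of `(I : xᵢ)_d` yields the competitor `xᵢ·W` of `I_{d+1}`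
and the Gotzmann inequality for `I` transfers. For squarefreeness, `xᵢ` is prime, so every
generator `x_A` of `I` has `i ∈ A`; hence `I = (xᵢ)·J` with `J` generated by the
`x_{A ∖ {i}}`, and cancelling `xᵢ` gives `(I : xᵢ) = J`.
-/

namespace Ideal

variable {R : Type*} [CommRing R] [IsDomain R]

theorem span_singleton_mul_colon {x : R} (hx : x ≠ 0) (J : Ideal R) :
    (span {x} * J).colon (span {x}) = J := by
  ext r
  rw [mem_colon_span_singleton, mem_span_singleton_mul, mul_comm r]
  simp only [mul_right_inj' hx, exists_eq_right]

end Ideal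

theorem Submodule.finrank_map_mulLeft {R A : Type*} [CommRing R] [Ring A] [IsDomain A]
    [Algebra R A] {a : A} (ha : a ≠ 0) (V : Submodule R A) :
    Module.finrank R (V.map (LinearMap.mulLeft R a)) = Module.finrank R V :=
  (equivMapOfInjective _ (fun _ _ => mul_left_cancel₀ ha) V).finrank_eq.symm

namespace MvPolynomial

theorem isHomogeneous_X_mul_iff {σ R : Type*} [CommSemiring R] {i : σ} {g : MvPolynomial σ R}
    {d : ℕ} :
    (X i * g).IsHomogeneous (d + 1) ↔ g.IsHomogeneous d := by
  refine ⟨fun h m hm => ?_, fun h => by simpa [add_comm] using (isHomogeneous_X R i).mul h⟩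
  have hdeg := h (by rwa [coeff_X_mul] : coeff (Finsupp.single i 1 + m) (X i * g) ≠ 0)
  rw [map_add, Finsupp.weight_single, Pi.one_apply, smul_eq_mul, one_mul] at hdeg
  omega

end MvPolynomial

section Colon

variable {k : Type*} [Field k] {n : ℕ}

theorem mulVars_map_mulLeft (p : MvPolynomial (Fin n) k)
    (V : Submodule k (MvPolynomial (Fin n) k)) :
    mulVars k (V.map (LinearMap.mulLeft k p)) = (mulVars k V).map (LinearMap.mulLeft k p) := by
  rw [mulVars, mulVars, Submodule.map_span]
  congr 1
  ext q
  constructor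
  · rintro ⟨j, _, ⟨v, hv, rfl⟩, rfl⟩
    exact ⟨X j * v, ⟨j, v, hv, rfl⟩, by simp only [LinearMap.mulLeft_apply]; ring⟩
  · rintro ⟨_, ⟨j, v, hv, rfl⟩, rfl⟩
    exact ⟨j, p * v, ⟨v, hv, rfl⟩, by simp only [LinearMap.mulLeft_apply]; ring⟩

theorem idealComponent_succ_eq_map_colon {I : Ideal (MvPolynomial (Fin n) k)} {i : Fin n}
    (hle : I ≤ Ideal.span {(X i : MvPolynomial (Fin n) k)}) (d : ℕ) :
    idealComponent k I (d + 1) =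
      (idealComponent k (I.colon (Ideal.span {(X i : MvPolynomial (Fin n) k)})) d).map
        (LinearMap.mulLeft k (X i)) := by
  ext p
  simp only [idealComponent, Submodule.mem_map, Submodule.mem_inf, Submodule.restrictScalars_mem,
    mem_homogeneousSubmodule, Ideal.mem_colon_span_singleton, LinearMap.mulLeft_apply]
  constructor
  · rintro ⟨hpI, hp⟩
    obtain ⟨g, rfl⟩ := Ideal.mem_span_singleton.mp (hle hpI)
    exact ⟨g, ⟨by rwa [mul_comm], isHomogeneous_X_mul_iff.mp hp⟩, rfl⟩
  · rintro ⟨g, ⟨hg, hhom⟩, rfl⟩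
    exact ⟨by rwa [mul_comm], isHomogeneous_X_mul_iff.mpr hhom⟩

theorem IsGotzmannSubspace.of_map_mulLeft_X {i : Fin n} {d : ℕ}
    {V : Submodule k (MvPolynomial (Fin n) k)}
    (h : IsGotzmannSubspace k n (d + 1) (V.map (LinearMap.mulLeft k (X i)))) :
    IsGotzmannSubspace k n d V := by
  have hX : (X i : MvPolynomial (Fin n) k) ≠ 0 := X_ne_zero i
  have mulLeft_le {W : Submodule k (MvPolynomial (Fin n) k)} :
      W.map (LinearMap.mulLeft k (X i)) ≤ homogeneousSubmodule (Fin n) k (d + 1) ↔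
        W ≤ homogeneousSubmodule (Fin n) k d := by
    rw [Submodule.map_le_iff_le_comap]
    simp only [SetLike.le_def, Submodule.mem_comap, LinearMap.mulLeft_apply,
      mem_homogeneousSubmodule, isHomogeneous_X_mul_iff]
  refine ⟨mulLeft_le.mp h.1, fun W hW hrank => ?_⟩
  have := h.2 (W.map (LinearMap.mulLeft k (X i))) (mulLeft_le.mpr hW)
    (by rw [Submodule.finrank_map_mulLeft hX, Submodule.finrank_map_mulLeft hX, hrank])
  rwa [mulVars_map_mulLeft, mulVars_map_mulLeft, Submodule.finrank_map_mulLeft hX,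
    Submodule.finrank_map_mulLeft hX] at this

theorem IsGotzmannIdeal.colon_span_X {I : Ideal (MvPolynomial (Fin n) k)} {i : Fin n}
    (hG : IsGotzmannIdeal I) (hle : I ≤ Ideal.span {(X i : MvPolynomial (Fin n) k)}) :
    IsGotzmannIdeal (I.colon (Ideal.span {(X i : MvPolynomial (Fin n) k)})) := fun d =>
  IsGotzmannSubspace.of_map_mulLeft_X (idealComponent_succ_eq_map_colon hle d ▸ hG (d + 1))

theorem mem_of_sqMonomial_mem_span_X {A : Finset (Fin n)} {i : Fin n}
    (h : sqMonomial k A ∈ Ideal.span {(X i : MvPolynomial (Fin n) k)}) : i ∈ A := by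
  obtain ⟨j, hj, hdvd⟩ := (X_prime (R := k)).dvd_finsetProd_iff _ |>.mp
    (Ideal.mem_span_singleton.mp h)
  exact X_dvd_X.mp hdvd ▸ hj

theorem X_mul_sqMonomial_erase {A : Finset (Fin n)} {i : Fin n} (hi : i ∈ A) :
    X i * sqMonomial k (A.erase i) = sqMonomial k A :=
  Finset.mul_prod_erase A X hi

theorem IsSquarefreeMonomialIdeal.colon_span_X {I : Ideal (MvPolynomial (Fin n) k)}
    {i : Fin n} (hsf : IsSquarefreeMonomialIdeal I)
    (hle : I ≤ Ideal.span {(X i : MvPolynomial (Fin n) k)}) :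
    IsSquarefreeMonomialIdeal (I.colon (Ideal.span {(X i : MvPolynomial (Fin n) k)})) := by
  obtain ⟨G, rfl⟩ := hsf
  have hiG : ∀ A ∈ G, i ∈ A := fun A hA =>
    mem_of_sqMonomial_mem_span_X (hle (Ideal.subset_span ⟨A, hA, rfl⟩))
  have hfactor : Ideal.span (sqMonomial k '' G) =
      Ideal.span {(X i : MvPolynomial (Fin n) k)} *
        Ideal.span (sqMonomial k '' ((·.erase i) '' G)) := by
    rw [Ideal.span_mul_span', Set.singleton_mul, Set.image_image, Set.image_image,
      Set.image_congr fun A hA => X_mul_sqMonomial_erase (hiG A hA)]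
  exact ⟨_, hfactor ▸ Ideal.span_singleton_mul_colon (X_ne_zero i) _⟩

end Colon

/-- **Lemma.** Let `I` be a Gotzmann squarefree monomial ideal of `S` with
`I ⊆ (xᵢ)`.  Then the colon ideal `(I : xᵢ) = {f : xᵢ·f ∈ I}` is a Gotzmann
squarefree monomial ideal of `S`. -/
theorem colon_of_gotzmann_squarefree {k : Type*} [Field k] {n : ℕ}
    (I : Ideal (MvPolynomial (Fin n) k)) (i : Fin n)
    (hsf : IsSquarefreeMonomialIdeal I) (hG : IsGotzmannIdeal I)
    (hle : I ≤ Ideal.span {(X i : MvPolynomial (Fin n) k)}) :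
    IsSquarefreeMonomialIdeal
        (Submodule.colon I (Ideal.span {(X i : MvPolynomial (Fin n) k)})) ∧
      IsGotzmannIdeal
        (Submodule.colon I (Ideal.span {(X i : MvPolynomial (Fin n) k)})) :=
  ⟨hsf.colon_span_X hle, hG.colon_span_X hle⟩
end

section
/- Let I be a Gotzmann squarefree monomial ideal of S = k[x_1,…,x_n] with x_n ∈ I. Then the ideal of the polynomial ring k[x_1,…,x_{n−1}] generated by the minimal monomial generators of I other than x_n (all of which are monomials in x_1,…,x_{n−1}) is a Gotzmann squarefree monomial ideal of k[x_1,…,x_{n−1}]. -/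
open MvPolynomial

/-! Since `xₙ ∈ I`, the squarefree monomial ideal `I` is `(xₙ) + J·S`, where `J = I ∩ k[x₁,…,xₙ₋₁]`
is generated by the minimal generators of `I` other than `xₙ`. In each degree `e + 1` this gives
a direct sum `I_{e+1} = xₙ·S_e ⊕ J_{e+1}`, and multiplication by the variables respects it:
`m₁·(xₙ·S_e ⊕ W) = xₙ·S_{e+1} ⊕ m₁·W` for every `W ⊆ k[x₁,…,xₙ₋₁]_{e+1}`. So replacing `J_{e+1}`
by a subspace `W` of the same dimension replaces `I_{e+1}` by `xₙ·S_e ⊕ W`, also of the same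
dimension, and all dimensions after multiplication shift by the constant `dim xₙ·S_{e+1}`; the
Gotzmann inequality for `I` becomes the one for `J`. In degree `0` there is nothing to prove,
as `S_0` is a line. -/

instance finiteDimensional_homogeneousSubmodule {k σ : Type*} [Field k] [Finite σ] (d : ℕ) :
    FiniteDimensional k (homogeneousSubmodule σ k d) :=
  Module.Finite.iff_fg.mpr (homogeneousSubmodule_fg σ k d)

theorem Submodule.eq_of_finrank_eq_of_le_of_finrank_le_one {k M : Type*} [Field k]
    [AddCommGroup M] [Module k M] {E U V : Submodule k M} [FiniteDimensional k E]
    (hE : Module.finrank k E ≤ 1) (hU : U ≤ E) (hV : V ≤ E)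
    (h : Module.finrank k U = Module.finrank k V) : U = V := by
  have := Submodule.finiteDimensional_of_le hU
  have := Submodule.finiteDimensional_of_le hV
  rcases Nat.eq_zero_or_pos (Module.finrank k U) with h0 | h0
  · rw [Submodule.finrank_eq_zero.mp h0, Submodule.finrank_eq_zero.mp (h.symm.trans h0)]
  · have hUE := Submodule.finrank_mono hU
    rw [Submodule.eq_of_le_of_finrank_le hU (by omega),
      Submodule.eq_of_le_of_finrank_le hV (by omega)]

section

variable {k : Type*} [Field k] {n : ℕ}

theorem isGotzmannSubspace_zero {V : Submodule k (MvPolynomial (Fin n) k)}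
    (hV : V ≤ homogeneousSubmodule (Fin n) k 0) : IsGotzmannSubspace k n 0 V := by
  refine ⟨hV, fun W hW hWV => le_of_eq ?_⟩
  have h1 : Module.finrank k (homogeneousSubmodule (Fin n) k 0) ≤ 1 := by
    rw [homogeneousSubmodule_zero, Submodule.one_eq_span]
    exact (finrank_span_singleton one_ne_zero).le
  rw [Submodule.eq_of_finrank_eq_of_le_of_finrank_le_one h1 hW hV hWV]

theorem mulVars_eq_mul (V : Submodule k (MvPolynomial (Fin n) k)) :
    mulVars k V = homogeneousSubmodule (Fin n) k 1 * V := by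
  rw [homogeneousSubmodule_one_eq_span_X, ← Submodule.span_eq V, Submodule.span_mul_span,
    Submodule.span_eq, mulVars]
  congr 1
  ext p
  simp only [Set.mem_ofPred_eq, Set.mem_mul, Set.mem_range, SetLike.mem_coe]
  constructor
  · rintro ⟨i, w, hw, rfl⟩
    exact ⟨_, ⟨i, rfl⟩, w, hw, rfl⟩
  · rintro ⟨_, ⟨i, rfl⟩, w, hw, rfl⟩
    exact ⟨i, w, hw, rfl⟩

theorem homogeneousSubmodule_one_mul (d : ℕ) :
    homogeneousSubmodule (Fin n) k 1 * homogeneousSubmodule (Fin n) k d =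
      homogeneousSubmodule (Fin n) k (d + 1) := by
  rw [← homogeneousSubmodule_one_pow (σ := Fin n) k (d + 1), pow_succ',
    homogeneousSubmodule_one_pow]

/-- Setting `xₙ = 0` retracts `S` onto `k[x₁,…,xₙ₋₁]` and kills `(xₙ)`; this separates the two
summands and maps `I` into `J`. -/
noncomputable def evalLastZero (k : Type*) [Field k] (n : ℕ) :
    MvPolynomial (Fin (n + 1)) k →ₐ[k] MvPolynomial (Fin n) k :=
  aeval (Fin.lastCases 0 X)

theorem evalLastZero_rename_castSucc (p : MvPolynomial (Fin n) k) :
    evalLastZero k n (rename Fin.castSucc p) = p := by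
  rw [← AlgHom.comp_apply, show (evalLastZero k n).comp (rename Fin.castSucc) = AlgHom.id k _
    from algHom_ext fun i => by simp [evalLastZero]]
  rfl

theorem evalLastZero_X_last : evalLastZero k n (X (Fin.last n)) = 0 := by
  simp [evalLastZero]

theorem eq_zero_of_rename_castSucc_mem_span_X_last {u : MvPolynomial (Fin n) k}
    (hu : rename Fin.castSucc u ∈ Ideal.span {(X (Fin.last n) : MvPolynomial (Fin (n + 1)) k)}) :
    u = 0 := by
  obtain ⟨q, hq⟩ := Ideal.mem_span_singleton'.mp hu
  rw [← evalLastZero_rename_castSucc u, ← hq, map_mul, evalLastZero_X_last, mul_zero]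

theorem finrank_sup_map_rename_castSucc {P : Submodule k (MvPolynomial (Fin (n + 1)) k)}
    (hP : P ≤ (Ideal.span {(X (Fin.last n) : MvPolynomial (Fin (n + 1)) k)}).restrictScalars k)
    (U : Submodule k (MvPolynomial (Fin n) k)) [FiniteDimensional k P] [FiniteDimensional k U] :
    Module.finrank k ↥(P ⊔ U.map (rename Fin.castSucc).toLinearMap) =
      Module.finrank k P + Module.finrank k U := by
  have hdisj : P ⊓ U.map (rename Fin.castSucc).toLinearMap = ⊥ := by
    rw [eq_bot_iff]
    rintro _ ⟨hp, u, -, rfl⟩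
    rw [eq_zero_of_rename_castSucc_mem_span_X_last (hP hp), map_zero]
    exact zero_mem _
  have hinj : Function.Injective (rename (R := k) (Fin.castSucc (n := n))) :=
    rename_injective _ (Fin.castSucc_injective n)
  have := Submodule.finrank_sup_add_finrank_inf_eq P (U.map (rename Fin.castSucc).toLinearMap)
  rwa [hdisj, finrank_bot, add_zero,
    (Submodule.equivMapOfInjective _ hinj U).symm.finrank_eq] at this

variable (k n) in
noncomputable def lastVarMultiples (e : ℕ) : Submodule k (MvPolynomial (Fin (n + 1)) k) :=
  Submodule.span k {X (Fin.last n)} * homogeneousSubmodule (Fin (n + 1)) k e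

theorem lastVarMultiples_le_span_X_last (e : ℕ) :
    lastVarMultiples k n e ≤
      (Ideal.span {(X (Fin.last n) : MvPolynomial (Fin (n + 1)) k)}).restrictScalars k :=
  Submodule.mul_le.mpr fun _ hx y _ =>
    Ideal.mul_mem_right y _ (Submodule.span_le_restrictScalars k _ _ hx)

theorem lastVarMultiples_le_homogeneousSubmodule (e : ℕ) :
    lastVarMultiples k n e ≤ homogeneousSubmodule (Fin (n + 1)) k (e + 1) := by
  have hX : Submodule.span k {X (Fin.last n)} ≤ homogeneousSubmodule (Fin (n + 1)) k 1 :=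
    Submodule.span_le.mpr (Set.singleton_subset_iff.mpr (isHomogeneous_X k _))
  rw [lastVarMultiples, add_comm e 1]
  exact (mul_le_mul' hX le_rfl).trans (homogeneousSubmodule_mul 1 e)

instance finiteDimensional_mulVars (W : Submodule k (MvPolynomial (Fin n) k))
    [FiniteDimensional k W] : FiniteDimensional k (mulVars k W) := by
  rw [mulVars_eq_mul]
  exact Module.Finite.iff_fg.mpr
    ((homogeneousSubmodule_fg _ k 1).mul (Module.Finite.iff_fg.mp inferInstance))

instance finiteDimensional_lastVarMultiples (e : ℕ) :
    FiniteDimensional k (lastVarMultiples k n e) :=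
  Submodule.finiteDimensional_of_le (lastVarMultiples_le_homogeneousSubmodule e)

theorem map_rename_le_homogeneousSubmodule {σ τ : Type*} (f : σ → τ) {d : ℕ}
    {W : Submodule k (MvPolynomial σ k)} (hW : W ≤ homogeneousSubmodule σ k d) :
    W.map (rename f).toLinearMap ≤ homogeneousSubmodule τ k d := by
  rintro _ ⟨w, hw, rfl⟩
  exact (hW hw).rename_isHomogeneous

theorem homogeneousSubmodule_one_le_sup :
    homogeneousSubmodule (Fin (n + 1)) k 1 ≤ Submodule.span k {X (Fin.last n)} ⊔
      (homogeneousSubmodule (Fin n) k 1).map (rename Fin.castSucc).toLinearMap := by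
  rw [homogeneousSubmodule_one_eq_span_X (σ := Fin (n + 1)), Submodule.span_le]
  rintro _ ⟨i, rfl⟩
  induction i using Fin.lastCases with
  | last => exact Submodule.mem_sup_left (Submodule.mem_span_singleton_self _)
  | cast j => exact Submodule.mem_sup_right ⟨X j, isHomogeneous_X k j, rename_X _ _⟩

theorem mulVars_lastVarMultiples_sup_map {e : ℕ} {W : Submodule k (MvPolynomial (Fin n) k)}
    (hW : W ≤ homogeneousSubmodule (Fin n) k (e + 1)) :
    mulVars k (lastVarMultiples k n e ⊔ W.map (rename Fin.castSucc).toLinearMap) =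
      lastVarMultiples k n (e + 1) ⊔ (mulVars k W).map (rename Fin.castSucc).toLinearMap := by
  have hlastW : Submodule.span k {X (Fin.last n)} * W.map (rename Fin.castSucc).toLinearMap ≤
      lastVarMultiples k n (e + 1) :=
    mul_le_mul' le_rfl (map_rename_le_homogeneousSubmodule _ hW)
  have hrename := map_rename_le_homogeneousSubmodule (k := k) (Fin.castSucc (n := n)) le_rfl
    (d := 1)
  rw [mulVars_eq_mul, mulVars_eq_mul, Submodule.mul_sup, lastVarMultiples, lastVarMultiples,
    mul_left_comm, homogeneousSubmodule_one_mul, Submodule.map_mul]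
  apply le_antisymm
  · refine sup_le le_sup_left ((mul_le_mul' homogeneousSubmodule_one_le_sup le_rfl).trans ?_)
    rw [Submodule.sup_mul]
    exact sup_le_sup_right hlastW _
  · exact sup_le_sup_left (mul_le_mul' hrename le_rfl) _

theorem IsGotzmannSubspace.of_lastVarMultiples_sup_map {e : ℕ}
    {V : Submodule k (MvPolynomial (Fin n) k)} (hV : V ≤ homogeneousSubmodule (Fin n) k (e + 1))
    (h : IsGotzmannSubspace k (n + 1) (e + 1)
      (lastVarMultiples k n e ⊔ V.map (rename Fin.castSucc).toLinearMap)) :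
    IsGotzmannSubspace k n (e + 1) V := by
  refine ⟨hV, fun W hW hWV => ?_⟩
  have := Submodule.finiteDimensional_of_le hV
  have := Submodule.finiteDimensional_of_le hW
  have hŴ := sup_le (lastVarMultiples_le_homogeneousSubmodule e)
    (map_rename_le_homogeneousSubmodule Fin.castSucc hW)
  have key := h.2 _ hŴ (by
    rw [finrank_sup_map_rename_castSucc (lastVarMultiples_le_span_X_last e),
      finrank_sup_map_rename_castSucc (lastVarMultiples_le_span_X_last e), hWV])
  rwa [mulVars_lastVarMultiples_sup_map hV, mulVars_lastVarMultiples_sup_map hW,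
    finrank_sup_map_rename_castSucc (lastVarMultiples_le_span_X_last _),
    finrank_sup_map_rename_castSucc (lastVarMultiples_le_span_X_last _),
    add_le_add_iff_left] at key

theorem sqMonomial_eq_monomial (A : Finset (Fin n)) :
    sqMonomial k A = monomial (∑ i ∈ A, Finsupp.single i 1) 1 := by
  rw [monomial_sum_one]
  rfl

theorem IsSquarefreeMonomialIdeal.monomial_coeff_mem {I : Ideal (MvPolynomial (Fin n) k)}
    (hI : IsSquarefreeMonomialIdeal I) {p : MvPolynomial (Fin n) k} (hp : p ∈ I)
    (s : Fin n →₀ ℕ) : monomial s (coeff s p) ∈ I := by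
  obtain ⟨G, rfl⟩ := hI
  by_cases hs : s ∈ p.support
  · have hG : sqMonomial k '' G = (fun s => monomial s (1 : k)) ''
        ((fun A => ∑ i ∈ A, Finsupp.single i 1) '' G) := by
      rw [Set.image_image]
      exact Set.image_congr fun A _ => sqMonomial_eq_monomial A
    rw [hG, mem_ideal_span_monomial_image] at hp ⊢
    intro t ht
    rw [Finset.mem_singleton.mp (support_monomial_subset ht)]
    exact hp s hs
  · rw [notMem_support_iff.mp hs, monomial_zero]
    exact zero_mem _

theorem monomial_mem_lastVarMultiples_sup_map {I : Ideal (MvPolynomial (Fin (n + 1)) k)}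
    {e : ℕ} {s : Fin (n + 1) →₀ ℕ} {c : k} (hm : monomial s c ∈ I) (hs : s.degree = e + 1) :
    monomial s c ∈ lastVarMultiples k n e ⊔ (idealComponent k (I.comap (rename Fin.castSucc))
      (e + 1)).map (rename Fin.castSucc).toLinearMap := by
  by_cases hlast : s (Fin.last n) = 0
  · by_cases hc : c = 0
    · rw [hc, monomial_zero]
      exact zero_mem _
    have hvars : ↑(monomial s c).vars ⊆ Set.range (Fin.castSucc (n := n)) := by
      rw [vars_monomial hc]
      intro i hi
      exact Fin.exists_castSucc_eq.mpr fun h => Finsupp.mem_support_iff.mp hi (h ▸ hlast)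
    obtain ⟨q, hq⟩ := exists_rename_eq_of_vars_subset_range _ _ (Fin.castSucc_injective n) hvars
    refine Submodule.mem_sup_right ⟨q, ⟨Ideal.mem_comap.mpr (hq ▸ hm), ?_⟩, hq⟩
    exact (IsHomogeneous.rename_isHomogeneous_iff (Fin.castSucc_injective n)).mp
      (hq ▸ isHomogeneous_monomial c hs)
  · obtain ⟨s', rfl⟩ := exists_add_of_le
      (Finsupp.single_le_iff.mpr (Nat.one_le_iff_ne_zero.mpr hlast))
    rw [map_add, Finsupp.degree_single, add_comm 1] at hs
    rw [monomial_single_add, pow_one]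
    exact Submodule.mem_sup_left (Submodule.mul_mem_mul (Submodule.mem_span_singleton_self _)
      (isHomogeneous_monomial c (Nat.add_right_cancel hs)))

theorem idealComponent_succ_eq {I : Ideal (MvPolynomial (Fin (n + 1)) k)}
    (hI : ∀ p ∈ I, ∀ s, monomial s (coeff s p) ∈ I) (hx : X (Fin.last n) ∈ I) (e : ℕ) :
    idealComponent k I (e + 1) = lastVarMultiples k n e ⊔
      (idealComponent k (I.comap (rename Fin.castSucc)) (e + 1)).map
        (rename Fin.castSucc).toLinearMap := by
  apply le_antisymm
  · rintro p ⟨hpI, hp⟩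
    rw [← p.support_sum_monomial_coeff]
    exact Submodule.sum_mem _ fun s hs =>
      monomial_mem_lastVarMultiples_sup_map (hI p hpI s) (hp.degree_eq_sum_deg_support hs).symm
  · refine sup_le (le_inf (fun p hp => ?_) (lastVarMultiples_le_homogeneousSubmodule e)) ?_
    · exact (Ideal.span_singleton_le_iff_mem I).mpr hx (lastVarMultiples_le_span_X_last e hp)
    · rintro _ ⟨q, ⟨hqI, hq⟩, rfl⟩
      exact ⟨hqI, hq.rename_isHomogeneous⟩

noncomputable def minGenIdealCastSucc (I : Ideal (MvPolynomial (Fin (n + 1)) k)) :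
    Ideal (MvPolynomial (Fin n) k) :=
  Ideal.span
    (sqMonomial k '' {A : Finset (Fin n) | IsMinimalSqGenerator I (A.image Fin.castSucc)})

theorem rename_castSucc_sqMonomial (A : Finset (Fin n)) :
    rename Fin.castSucc (sqMonomial k A) = sqMonomial k (A.image Fin.castSucc) := by
  rw [sqMonomial, map_prod, sqMonomial, Finset.prod_image (Fin.castSucc_injective n).injOn]
  simp only [rename_X]

theorem exists_isMinimalSqGenerator_subset {I : Ideal (MvPolynomial (Fin n) k)}
    {A : Finset (Fin n)} (hA : sqMonomial k A ∈ I) : ∃ B ⊆ A, IsMinimalSqGenerator I B := by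
  obtain ⟨B, hBA, hB⟩ := exists_minimal_le_of_wellFoundedLT (fun B => sqMonomial k B ∈ I) A hA
  exact ⟨B, hBA, hB.prop, fun C hCB hC => hCB.2 (hB.2 hC hCB.1)⟩

theorem sqMonomial_mem_minGenIdealCastSucc {I : Ideal (MvPolynomial (Fin (n + 1)) k)}
    {A : Finset (Fin n)} (hA : sqMonomial k (A.image Fin.castSucc) ∈ I) :
    sqMonomial k A ∈ minGenIdealCastSucc I := by
  obtain ⟨B, hBA, hB⟩ := exists_isMinimalSqGenerator_subset hA
  obtain ⟨B', hB'A, rfl⟩ := Finset.subset_image_iff.mp hBA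
  exact Ideal.mem_of_dvd _ (Finset.prod_dvd_prod_of_subset _ _ _ hB'A)
    (Ideal.subset_span ⟨B', hB, rfl⟩)

theorem map_evalLastZero_le {I : Ideal (MvPolynomial (Fin (n + 1)) k)}
    (hI : IsSquarefreeMonomialIdeal I) : I.map (evalLastZero k n) ≤ minGenIdealCastSucc I := by
  obtain ⟨G, hG⟩ := hI
  rw [hG, Ideal.map_span, Ideal.span_le, ← hG]
  rintro _ ⟨_, ⟨A, hA, rfl⟩, rfl⟩
  by_cases hlast : Fin.last n ∈ A
  · rw [SetLike.mem_coe, sqMonomial, map_prod, Finset.prod_eq_zero hlast evalLastZero_X_last]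
    exact zero_mem _
  · obtain ⟨A', -, rfl⟩ : ∃ A' ⊆ Finset.univ, A'.image Fin.castSucc = A :=
      Finset.subset_image_iff.mp fun i hi =>
        Finset.mem_image.mpr ⟨i.castPred (ne_of_mem_of_not_mem hi hlast), Finset.mem_univ _,
          Fin.castSucc_castPred _ _⟩
    rw [← rename_castSucc_sqMonomial, SetLike.mem_coe, evalLastZero_rename_castSucc]
    exact sqMonomial_mem_minGenIdealCastSucc (hG ▸ Ideal.subset_span ⟨_, hA, rfl⟩)

theorem comap_rename_castSucc_eq_minGenIdealCastSucc {I : Ideal (MvPolynomial (Fin (n + 1)) k)}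
    (hI : IsSquarefreeMonomialIdeal I) :
    I.comap (rename Fin.castSucc) = minGenIdealCastSucc I := by
  refine le_antisymm (fun u hu => ?_) (Ideal.span_le.mpr ?_)
  · rw [← evalLastZero_rename_castSucc u]
    exact map_evalLastZero_le hI (Ideal.mem_map_of_mem _ hu)
  · rintro _ ⟨A, hA, rfl⟩
    exact Ideal.mem_comap.mpr ((rename_castSucc_sqMonomial (k := k) A).symm ▸ hA.1)

theorem IsGotzmannIdeal.comap_rename_castSucc {I : Ideal (MvPolynomial (Fin (n + 1)) k)}
    (hI : ∀ p ∈ I, ∀ s, monomial s (coeff s p) ∈ I)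
    (hx : X (Fin.last n) ∈ I) (hG : IsGotzmannIdeal I) :
    IsGotzmannIdeal (I.comap (rename Fin.castSucc)) := by
  rintro (_ | e)
  · exact isGotzmannSubspace_zero inf_le_right
  · refine IsGotzmannSubspace.of_lastVarMultiples_sup_map inf_le_right ?_
    rw [← idealComponent_succ_eq hI hx]
    exact hG (e + 1)

end

/-- **Lemma.** Let `I` be a Gotzmann squarefree monomial ideal of
`S = k[x₁,…,x_{n+1}]` containing the last variable.  Then the ideal of
`k[x₁,…,xₙ]` generated by the minimal monomial generators of `I` other than the
last variable (all of which only involve the first `n` variables) is a Gotzmann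
squarefree monomial ideal of `k[x₁,…,xₙ]`. -/
theorem quotient_of_gotzmann_squarefree {k : Type*} [Field k] {n : ℕ}
    (I : Ideal (MvPolynomial (Fin (n + 1)) k))
    (hsf : IsSquarefreeMonomialIdeal I) (hG : IsGotzmannIdeal I)
    (hx : (X (Fin.last n) : MvPolynomial (Fin (n + 1)) k) ∈ I) :
    IsSquarefreeMonomialIdeal
        (Ideal.span (sqMonomial k ''
          {A : Finset (Fin n) | IsMinimalSqGenerator I (A.image Fin.castSucc)})) ∧
      IsGotzmannIdeal
        (Ideal.span (sqMonomial k ''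
          {A : Finset (Fin n) | IsMinimalSqGenerator I (A.image Fin.castSucc)})) := by
  have hJ := hG.comap_rename_castSucc (fun _ hp => hsf.monomial_coeff_mem hp) hx
  rw [comap_rename_castSucc_eq_minGenIdealCastSucc hsf] at hJ
  exact ⟨⟨_, rfl⟩, hJ⟩
end

section
/- Let 𝒜 be a Gotzmann family of d-element subsets of a finite set X, let i ∈ X, and let (𝒜₀, 𝒜₁) be the i-decomposition of 𝒜. Then 𝒜₀ is a Gotzmann family of d-element subsets of X ∖ {i}. -/
/-- The upper shadow `∂⁺𝒜 = {A ∪ {x} : A ∈ 𝒜, x ∈ X \ A}` of a family of finite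
sets, taken within the ground set `X`. -/
def upShadowIn {α : Type*} [DecidableEq α] (X : Finset α) (𝒜 : Set (Finset α)) :
    Set (Finset α) :=
  {B | ∃ A ∈ 𝒜, ∃ x ∈ X, x ∉ A ∧ B = insert x A}

/-- A Gotzmann family of `d`-element subsets of the ground set `X`: its upper shadow
(in `X`) is no larger than that of any other family of `d`-element subsets of `X` of
the same cardinality. -/
def IsGotzmannFamily {α : Type*} [DecidableEq α] (X : Finset α) (d : ℕ)
    (𝒜 : Set (Finset α)) : Prop :=
  (∀ A ∈ 𝒜, A ⊆ X ∧ A.card = d) ∧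
    ∀ ℬ : Set (Finset α), (∀ B ∈ ℬ, B ⊆ X ∧ B.card = d) → ℬ.ncard = 𝒜.ncard →
      (upShadowIn X 𝒜).ncard ≤ (upShadowIn X ℬ).ncard

/-- First part `𝒜₀ = {A ∈ 𝒜 : i ∉ A}` of the `i`-decomposition of `𝒜`. -/
def decompZero {α : Type*} (i : α) (𝒜 : Set (Finset α)) : Set (Finset α) :=
  {A ∈ 𝒜 | i ∉ A}

/-- Second part `𝒜₁ = {A \ {i} : A ∈ 𝒜, i ∈ A}` of the `i`-decomposition of `𝒜`. -/
def decompOne {α : Type*} [DecidableEq α] (i : α) (𝒜 : Set (Finset α)) : Set (Finset α) :=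
  {B | ∃ A ∈ 𝒜, i ∈ A ∧ B = A.erase i}

/-- `A` precedes `B` in the lex order on finite sets induced by the strict order `r`:
the `r`-least element of the symmetric difference `A Δ B` lies in `A`. -/
def lexLT {α : Type*} (r : α → α → Prop) (A B : Finset α) : Prop :=
  ∃ x ∈ A, x ∉ B ∧ ∀ y, r y x → (y ∈ A ↔ y ∈ B)

/-- `r` is a strict linear order on the elements of `Y`. -/
def IsLinearOrderOn {α : Type*} (r : α → α → Prop) (Y : Finset α) : Prop :=
  (∀ a ∈ Y, ¬ r a a) ∧
    (∀ a ∈ Y, ∀ b ∈ Y, ∀ c ∈ Y, r a b → r b c → r a c) ∧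
    (∀ a ∈ Y, ∀ b ∈ Y, a ≠ b → r a b ∨ r b a)

/-- A lex segment: a family of `e`-element subsets of `Y` that is an initial segment
of the lex order (induced by the strict order `r`) on `e`-element subsets of `Y`. -/
def IsLexSegmentFamily {α : Type*} (r : α → α → Prop) (Y : Finset α) (e : ℕ)
    (L : Set (Finset α)) : Prop :=
  (∀ B ∈ L, B ⊆ Y ∧ B.card = e) ∧
    ∀ B ∈ L, ∀ A : Finset α, A ⊆ Y → A.card = e → lexLT r A B → A ∈ L

/-- The Alexander dual `𝒜^∨ = {X \ A : A ⊆ X, |A| = d, A ∉ 𝒜}` of a family `𝒜` of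
`d`-element subsets of `X`. -/
def alexDual {α : Type*} [DecidableEq α] (X : Finset α) (d : ℕ) (𝒜 : Set (Finset α)) :
    Set (Finset α) :=
  {B | ∃ A : Finset α, A ⊆ X ∧ A.card = d ∧ A ∉ 𝒜 ∧ B = X \ A}

/-- A family of `d`-element subsets of `X` is dual-Gotzmann if its Alexander dual is
Gotzmann in `X`. -/
def IsDualGotzmann {α : Type*} [DecidableEq α] (X : Finset α) (d : ℕ)
    (𝒜 : Set (Finset α)) : Prop :=
  IsGotzmannFamily X (X.card - d) (alexDual X d 𝒜)

/-!
Passing to complements in `X` turns upper shadows into lower shadows: a Gotzmann family becomes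
a family `ℱ` of `(|X| - d)`-sets of minimal shadow, and `𝒜₀` becomes the link
`ℱ₁ = {F \ {i} : i ∈ F ∈ ℱ}`. With `ℱ₀ = {F ∈ ℱ : i ∉ F}` one has
`|∂ℱ| = |∂ℱ₀ ∪ ℱ₁| + |∂ℱ₁|`. Order the ground set so that `i` comes last and replace `ℱ₀`, `ℱ₁` by
colex initial segments `𝒟`, `𝒞` of the same sizes. These avoid `i`, so `𝒟 ∪ {C ∪ {i} : C ∈ 𝒞}`
competes with `ℱ`; as `∂𝒟` and `𝒞` are nested initial segments, Kruskal–Katona gives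
`|∂𝒟 ∪ 𝒞| ≤ |∂ℱ₀ ∪ ℱ₁|`, so minimality of `ℱ` forces `|∂ℱ₁| ≤ |∂𝒞|`, the Kruskal–Katona minimum.
-/

open Finset
open scoped FinsetFamily

namespace Finset

namespace Colex

variable {α : Type*} [LinearOrder α] {𝒜 ℬ 𝒞 : Finset (Finset α)} {s t : Finset α} {r : ℕ}

lemma IsInitSeg.card_union (h𝒜 : IsInitSeg 𝒜 r) (hℬ : IsInitSeg ℬ r) :
    #(𝒜 ∪ ℬ) = max #𝒜 #ℬ := by
  rcases h𝒜.total hℬ with h | h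
  · rw [union_eq_right.2 h, max_eq_right (card_le_card h)]
  · rw [union_eq_left.2 h, max_eq_left (card_le_card h)]

lemma exists_isInitSeg_card_eq [Fintype α] {m : ℕ} (hm : m ≤ (Fintype.card α).choose r) :
    ∃ 𝒞 : Finset (Finset α), IsInitSeg 𝒞 r ∧ #𝒞 = m := by
  induction m with
  | zero => exact ⟨∅, isInitSeg_empty, rfl⟩
  | succ m ih =>
    obtain ⟨𝒞, h𝒞, rfl⟩ := ih (by omega)
    have hne : (powersetCard r univ \ 𝒞).Nonempty := by
      rw [sdiff_nonempty]
      intro hsub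
      have := card_le_card hsub
      rw [card_powersetCard, card_univ] at this
      omega
    obtain ⟨s, hs, hmin⟩ := exists_min_image _ toColex hne
    obtain ⟨hsr, hs𝒞⟩ := mem_sdiff.1 hs
    refine ⟨insert s 𝒞, ⟨?_, ?_⟩, card_insert_of_notMem hs𝒞⟩
    · rintro t ht
      obtain rfl | ht := mem_insert.1 ht
      exacts [(mem_powersetCard.1 hsr).2, h𝒞.1 ht]
    · rintro t u ht ⟨hut, hu⟩
      refine mem_insert_of_mem (by_contra fun hu𝒞 => ?_)
      obtain rfl | ht := mem_insert.1 ht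
      · exact (hmin u (mem_sdiff.2 ⟨mem_powersetCard.2 ⟨subset_univ u, hu⟩, hu𝒞⟩)).not_gt hut
      · exact hu𝒞 (h𝒞.2 ht ⟨hut, hu⟩)

lemma toColex_lt_toColex_of_top_mem [OrderTop α] (hs : ⊤ ∈ s) (ht : ⊤ ∉ t) :
    toColex t < toColex s :=
  toColex_lt_toColex_iff_exists_forall_lt.2
    ⟨⊤, hs, ht, fun _ _ hbs => lt_top_iff_ne_top.2 fun h => hbs (h ▸ hs)⟩

lemma IsInitSeg.top_notMem [Fintype α] [OrderTop α] (h𝒞 : IsInitSeg 𝒞 r)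
    (hcard : #𝒞 ≤ (Fintype.card α - 1).choose r) (hs : s ∈ 𝒞) : ⊤ ∉ s := by
  intro htop
  have hsub : insert s (powersetCard r (univ.erase ⊤)) ⊆ 𝒞 := by
    refine insert_subset hs fun t ht => ?_
    obtain ⟨htsub, htr⟩ := mem_powersetCard.1 ht
    exact h𝒞.2 hs ⟨toColex_lt_toColex_of_top_mem htop fun h => by simpa using htsub h, htr⟩
  have hsnot : s ∉ powersetCard r (univ.erase ⊤) := fun h => by
    simpa using (mem_powersetCard.1 h).1 htop
  have := card_le_card hsub
  rw [card_insert_of_notMem hsnot, card_powersetCard, card_erase_of_mem (mem_univ _),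
    card_univ] at this
  omega

end Colex

variable {α : Type*} [DecidableEq α] {𝒜 𝒞 𝒟 : Finset (Finset α)} {a : α} {r : ℕ}

lemma memberSubfamily_shadow : (∂ 𝒜).memberSubfamily a = ∂ (𝒜.memberSubfamily a) := by
  ext s
  simp only [mem_memberSubfamily, mem_shadow_iff_insert_mem, mem_insert, not_or]
  constructor
  · rintro ⟨⟨x, ⟨hxa, hxs⟩, hx⟩, has⟩
    exact ⟨x, hxs, by rwa [insert_comm], Ne.symm hxa, has⟩
  · rintro ⟨x, hxs, hx, hax, has⟩
    exact ⟨⟨x, ⟨Ne.symm hax, hxs⟩, by rwa [insert_comm]⟩, has⟩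

lemma nonMemberSubfamily_shadow :
    (∂ 𝒜).nonMemberSubfamily a = ∂ (𝒜.nonMemberSubfamily a) ∪ 𝒜.memberSubfamily a := by
  ext s
  simp only [mem_union, mem_nonMemberSubfamily, mem_memberSubfamily, mem_shadow_iff_insert_mem,
    mem_insert, not_or]
  constructor
  · rintro ⟨⟨x, hxs, hx⟩, has⟩
    obtain rfl | hxa := eq_or_ne x a
    · exact .inr ⟨hx, has⟩
    · exact .inl ⟨x, hxs, hx, hxa.symm, has⟩
  · rintro (⟨x, hxs, hx, hax, has⟩ | ⟨hx, has⟩)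
    exacts [⟨⟨x, hxs, hx⟩, has⟩, ⟨⟨a, has, hx⟩, has⟩]

lemma card_shadow_eq_card_union_add_card (𝒜 : Finset (Finset α)) (a : α) :
    #(∂ 𝒜) = #(∂ (𝒜.nonMemberSubfamily a) ∪ 𝒜.memberSubfamily a) + #(∂ (𝒜.memberSubfamily a)) := by
  rw [← nonMemberSubfamily_shadow, ← memberSubfamily_shadow, add_comm,
    card_memberSubfamily_add_card_nonMemberSubfamily]

lemma nonMemberSubfamily_union_image_insert (h𝒟 : ∀ s ∈ 𝒟, a ∉ s) :
    (𝒟 ∪ 𝒞.image (insert a)).nonMemberSubfamily a = 𝒟 := by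
  rw [nonMemberSubfamily_union, nonMemberSubfamily_image_insert, union_empty]
  exact filter_true_of_mem h𝒟

lemma memberSubfamily_union_image_insert (h𝒟 : ∀ s ∈ 𝒟, a ∉ s) (h𝒞 : ∀ s ∈ 𝒞, a ∉ s) :
    (𝒟 ∪ 𝒞.image (insert a)).memberSubfamily a = 𝒞 := by
  rw [memberSubfamily_union, memberSubfamily_image_insert h𝒞, union_eq_right]
  intro s hs
  exact absurd (mem_insert_self a s) (h𝒟 _ (mem_memberSubfamily.1 hs).1)

lemma _root_.Set.Sized.memberSubfamily (h𝒜 : (𝒜 : Set (Finset α)).Sized r) :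
    ((𝒜.memberSubfamily a : Finset (Finset α)) : Set (Finset α)).Sized (r - 1) := by
  intro s hs
  obtain ⟨hs𝒜, has⟩ := mem_memberSubfamily.1 hs
  have := h𝒜 hs𝒜
  rw [card_insert_of_notMem has] at this
  omega

end Finset

section ShadowMinimal

variable {α : Type*} [DecidableEq α]

def IsShadowMinimal (r : ℕ) (𝒜 : Finset (Finset α)) : Prop :=
  (𝒜 : Set (Finset α)).Sized r ∧
    ∀ ℬ : Finset (Finset α), (ℬ : Set (Finset α)).Sized r → #ℬ = #𝒜 → #(∂ 𝒜) ≤ #(∂ ℬ)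

open Finset.Colex in
theorem IsShadowMinimal.memberSubfamily_top {n r : ℕ} {ℱ : Finset (Finset (Fin (n + 1)))}
    (hℱ : IsShadowMinimal r ℱ) : IsShadowMinimal (r - 1) (ℱ.memberSubfamily ⊤) := by
  set ℱ₀ := ℱ.nonMemberSubfamily ⊤ with hℱ₀
  set ℱ₁ := ℱ.memberSubfamily ⊤ with hℱ₁
  have h₁sized : (ℱ₁ : Set (Finset (Fin (n + 1)))).Sized (r - 1) := hℱ.1.memberSubfamily
  refine ⟨h₁sized, fun ℬ hℬ hcard => ?_⟩
  obtain rfl | hr := r.eq_zero_or_pos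
  · have : ℱ₁ = ∅ := eq_empty_of_forall_notMem fun s hs => by
      simpa using hℱ.1 (mem_memberSubfamily.1 hs).1
    simp [this]
  have hchoose {k : ℕ} {𝒢 : Finset (Finset (Fin (n + 1)))}
      (h𝒢 : (𝒢 : Set (Finset (Fin (n + 1)))).Sized k) (htop : ∀ s ∈ 𝒢, ⊤ ∉ s) :
      #𝒢 ≤ n.choose k := by
    simpa using card_le_card fun s hs =>
      mem_powersetCard.2 ⟨fun x hx => mem_erase.2 ⟨ne_of_mem_of_not_mem hx (htop s hs), mem_univ x⟩,
        h𝒢 hs⟩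
  have h₀le : #ℱ₀ ≤ n.choose r :=
    hchoose (hℱ.1.mono (filter_subset _ _)) fun s hs => (mem_nonMemberSubfamily.1 hs).2
  have h₁le : #ℱ₁ ≤ n.choose (r - 1) :=
    hchoose h₁sized fun s hs => (mem_memberSubfamily.1 hs).2
  obtain ⟨𝒟, h𝒟, h𝒟card⟩ := exists_isInitSeg_card_eq (α := Fin (n + 1)) (r := r) (m := #ℱ₀)
    (by simpa using h₀le.trans (n.choose_le_succ r))
  obtain ⟨𝒞, h𝒞, h𝒞card⟩ := exists_isInitSeg_card_eq (α := Fin (n + 1)) (r := r - 1) (m := #ℱ₁)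
    (by simpa using h₁le.trans (n.choose_le_succ _))
  have h𝒟top : ∀ s ∈ 𝒟, ⊤ ∉ s := fun s => h𝒟.top_notMem (by simpa [h𝒟card] using h₀le)
  have h𝒞top : ∀ s ∈ 𝒞, ⊤ ∉ s := fun s => h𝒞.top_notMem (by simpa [h𝒞card] using h₁le)
  set 𝒢 := 𝒟 ∪ 𝒞.image (insert ⊤)
  have h𝒢₀ : 𝒢.nonMemberSubfamily ⊤ = 𝒟 := nonMemberSubfamily_union_image_insert h𝒟top
  have h𝒢₁ : 𝒢.memberSubfamily ⊤ = 𝒞 := memberSubfamily_union_image_insert h𝒟top h𝒞top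
  have h𝒢sized : (𝒢 : Set (Finset (Fin (n + 1)))).Sized r := by
    intro s hs
    obtain hs | ⟨t, ht, rfl⟩ := mem_union.1 hs |>.imp id mem_image.1
    · exact h𝒟.1 hs
    · rw [card_insert_of_notMem (h𝒞top t ht), h𝒞.1 ht]
      omega
  have h𝒢card : #𝒢 = #ℱ := by
    rw [← card_memberSubfamily_add_card_nonMemberSubfamily ⊤ 𝒢, h𝒢₀, h𝒢₁, h𝒞card, h𝒟card,
      card_memberSubfamily_add_card_nonMemberSubfamily]
  have hmin := hℱ.2 𝒢 h𝒢sized h𝒢card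
  rw [card_shadow_eq_card_union_add_card ℱ ⊤, card_shadow_eq_card_union_add_card 𝒢 ⊤, h𝒢₀,
    h𝒢₁, ← hℱ₀, ← hℱ₁] at hmin
  have hunion : #(∂ 𝒟 ∪ 𝒞) ≤ #(∂ ℱ₀ ∪ ℱ₁) := by
    rw [h𝒟.shadow.card_union h𝒞]
    exact max_le ((kruskal_katona (hℱ.1.mono (filter_subset _ _)) h𝒟card.le h𝒟).trans
      (card_le_card subset_union_left)) (h𝒞card ▸ card_le_card subset_union_right)
  calc #(∂ ℱ₁) ≤ #(∂ 𝒞) := by omega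
    _ ≤ #(∂ ℬ) := kruskal_katona hℬ (by omega) h𝒞

end ShadowMinimal

section MapCompl

variable {α β : Type*} [DecidableEq β] (g : β ↪ α) (U : Finset β)

def mapCompl (S : Finset β) : Finset α := (U \ S).map g

variable {g U} {𝒦 : Finset (Finset β)}

lemma mapCompl_injOn : Set.InjOn (mapCompl g U) {S | S ⊆ U} := fun S hS T hT h => by
  rw [← sdiff_sdiff_eq_self hS, ← sdiff_sdiff_eq_self hT, map_injective g h]

lemma card_mapCompl {S : Finset β} (hS : S ⊆ U) : #(mapCompl g U S) = #U - #S := by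
  rw [mapCompl, card_map, card_sdiff_of_subset hS]

lemma ncard_image_mapCompl [DecidableEq α] (h𝒦 : ∀ S ∈ 𝒦, S ⊆ U) :
    ((𝒦.image (mapCompl g U) : Finset (Finset α)) : Set (Finset α)).ncard = #𝒦 := by
  rw [Set.ncard_coe_finset, card_image_of_injOn (mapCompl_injOn.mono h𝒦)]

lemma upShadowIn_image_mapCompl [DecidableEq α] (h𝒦 : ∀ S ∈ 𝒦, S ⊆ U) :
    upShadowIn (U.map g) ↑(𝒦.image (mapCompl g U)) = ↑((∂ 𝒦).image (mapCompl g U)) := by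
  ext B
  simp only [upShadowIn, mapCompl, Set.mem_ofPred_eq, coe_image, Set.mem_image, mem_coe,
    mem_shadow_iff, mem_map]
  constructor
  · rintro ⟨_, ⟨S, hS, rfl⟩, _, ⟨y, hyU, rfl⟩, hy, rfl⟩
    have hyS : y ∈ S := by simpa [hyU] using hy
    exact ⟨S.erase y, ⟨S, hS, y, hyS, rfl⟩, by rw [sdiff_erase hyU, map_insert]⟩
  · rintro ⟨_, ⟨S, hS, y, hyS, rfl⟩, rfl⟩
    have hyU := h𝒦 S hS hyS
    exact ⟨_, ⟨S, hS, rfl⟩, g y, ⟨y, hyU, rfl⟩, by simp [hyS], by rw [sdiff_erase hyU, map_insert]⟩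

lemma ncard_upShadowIn_image_mapCompl [DecidableEq α] (h𝒦 : ∀ S ∈ 𝒦, S ⊆ U) :
    (upShadowIn (U.map g) ↑(𝒦.image (mapCompl g U))).ncard = #(∂ 𝒦) := by
  rw [upShadowIn_image_mapCompl h𝒦, ncard_image_mapCompl fun S hS => ?_]
  obtain ⟨T, hT, hST⟩ := exists_subset_of_mem_shadow hS
  exact hST.trans (h𝒦 T hT)

lemma exists_eq_image_mapCompl [DecidableEq α] {ℬ : Set (Finset α)}
    (hℬ : ∀ B ∈ ℬ, B ⊆ U.map g) :
    ∃ 𝒦 : Finset (Finset β), (∀ S ∈ 𝒦, S ⊆ U) ∧ ℬ = ↑(𝒦.image (mapCompl g U)) := by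
  classical
  have hpre (B) (hB : B ∈ ℬ) : mapCompl g U {y ∈ U | g y ∉ B} = B := by
    ext x
    simp only [mapCompl, mem_map, mem_sdiff, mem_filter, not_and, not_not]
    constructor
    · rintro ⟨y, ⟨hyU, hy⟩, rfl⟩
      exact hy hyU
    · intro hx
      obtain ⟨y, hyU, rfl⟩ := mem_map.1 (hℬ B hB hx)
      exact ⟨y, ⟨hyU, fun _ => hx⟩, rfl⟩
  refine ⟨U.powerset.filter (mapCompl g U · ∈ ℬ),
    fun S hS => mem_powerset.1 (mem_filter.1 hS).1, ?_⟩
  ext B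
  simp only [coe_image, coe_filter, Set.mem_image, Set.mem_ofPred_eq, mem_powerset]
  refine ⟨fun hB => ⟨_, ⟨filter_subset _ _, (hpre B hB).symm ▸ hB⟩, hpre B hB⟩, ?_⟩
  rintro ⟨S, ⟨-, hS⟩, rfl⟩
  exact hS

lemma decompZero_image_mapCompl [DecidableEq α] {a : β} (ha : a ∈ U) :
    decompZero (g a) ↑(𝒦.image (mapCompl g U)) =
      ↑((𝒦.memberSubfamily a).image (mapCompl g (U.erase a))) := by
  ext A
  simp only [decompZero, mapCompl, coe_image, Set.mem_image, mem_coe, Set.mem_ofPred_eq,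
    mem_memberSubfamily]
  constructor
  · rintro ⟨⟨S, hS, rfl⟩, haS⟩
    have haS : a ∈ S := by simpa [ha] using haS
    refine ⟨S.erase a, ⟨by rwa [insert_erase haS], notMem_erase a S⟩, ?_⟩
    rw [erase_sdiff_comm, ← sdiff_insert, insert_erase haS]
  · rintro ⟨T, ⟨hT, -⟩, rfl⟩
    exact ⟨⟨insert a T, hT, by rw [erase_sdiff_comm, sdiff_insert]⟩, by simp⟩

end MapCompl

section Transfer

variable {α β : Type*} [DecidableEq α] [DecidableEq β] {g : β ↪ α} {𝒦 : Finset (Finset β)} {d : ℕ}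

theorem isShadowMinimal_of_isGotzmannFamily [Fintype β]
    (h : IsGotzmannFamily (univ.map g) d ↑(𝒦.image (mapCompl g univ))) :
    IsShadowMinimal (Fintype.card β - d) 𝒦 := by
  have hcard_mapCompl {S} (hS : S ∈ 𝒦) : Fintype.card β - #S = d := by
    rw [← card_univ, ← card_mapCompl (subset_univ S)]
    exact (h.1 _ (mem_image_of_mem _ hS)).2
  refine ⟨fun S hS => ?_, fun 𝒢 h𝒢 hcard => ?_⟩
  · have := hcard_mapCompl hS
    have := card_le_univ S
    omega
  obtain rfl | ⟨S, hS⟩ := 𝒦.eq_empty_or_nonempty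
  · simp
  have hd := hcard_mapCompl hS
  have hmin := h.2 ↑(𝒢.image (mapCompl g univ)) (fun B hB => ?_)
    (by rw [ncard_image_mapCompl fun _ _ => subset_univ _,
      ncard_image_mapCompl fun _ _ => subset_univ _, hcard])
  · rwa [ncard_upShadowIn_image_mapCompl fun _ _ => subset_univ _,
      ncard_upShadowIn_image_mapCompl fun _ _ => subset_univ _] at hmin
  obtain ⟨T, hT, rfl⟩ := mem_image.1 hB
  refine ⟨map_subset_map.2 sdiff_subset, ?_⟩
  rw [card_mapCompl (subset_univ T), h𝒢 hT, card_univ]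
  omega

theorem IsShadowMinimal.ncard_upShadowIn_le {U : Finset β} (h : IsShadowMinimal (#U - d) 𝒦)
    (h𝒦 : ∀ S ∈ 𝒦, S ⊆ U) {ℬ : Set (Finset α)} (hℬ : ∀ B ∈ ℬ, B ⊆ U.map g ∧ #B = d)
    (hcard : ℬ.ncard = (↑(𝒦.image (mapCompl g U)) : Set (Finset α)).ncard) :
    (upShadowIn (U.map g) ↑(𝒦.image (mapCompl g U))).ncard ≤ (upShadowIn (U.map g) ℬ).ncard := by
  obtain ⟨𝒢, h𝒢, rfl⟩ := exists_eq_image_mapCompl fun B hB => (hℬ B hB).1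
  rw [ncard_image_mapCompl h𝒢, ncard_image_mapCompl h𝒦] at hcard
  rw [ncard_upShadowIn_image_mapCompl h𝒦, ncard_upShadowIn_image_mapCompl h𝒢]
  refine h.2 𝒢 (fun S hS => ?_) hcard
  have := (hℬ _ (mem_image_of_mem _ hS)).2
  rw [card_mapCompl (h𝒢 S hS)] at this
  have := card_le_card (h𝒢 S hS)
  omega

end Transfer

lemma Finset.exists_fin_embedding_map_univ_eq {α : Type*} [DecidableEq α] {X : Finset α} {i : α}
    (hi : i ∈ X) : ∃ (n : ℕ) (g : Fin (n + 1) ↪ α), univ.map g = X ∧ g ⊤ = i := by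
  obtain ⟨n, hn⟩ := Nat.exists_eq_succ_of_ne_zero (card_ne_zero_of_mem hi)
  let e := (X.equivFinOfCardEq hn).trans (Equiv.swap (X.equivFinOfCardEq hn ⟨i, hi⟩) ⊤)
  refine ⟨n, e.symm.toEmbedding.trans (Function.Embedding.subtype (· ∈ X)), ?_, ?_⟩
  · ext x
    simp only [mem_map, mem_univ, true_and]
    exact ⟨fun ⟨a, ha⟩ => ha ▸ (e.symm a).2, fun hx => ⟨e ⟨x, hx⟩, by simp⟩⟩
  · simp [e]

/-- **Proposition.** If `𝒜` is a Gotzmann family of `d`-element subsets of `X` and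
`i ∈ X`, then the first part `𝒜₀` of the `i`-decomposition of `𝒜` is a Gotzmann
family of `d`-element subsets of `X \ {i}`. -/
theorem decompZero_isGotzmann {α : Type*} [DecidableEq α]
    (X : Finset α) (d : ℕ) (𝒜 : Set (Finset α)) (i : α) (hi : i ∈ X)
    (hG : IsGotzmannFamily X d 𝒜) :
    IsGotzmannFamily (X.erase i) d (decompZero i 𝒜) := by
  refine ⟨fun A hA => ⟨subset_erase.2 ⟨(hG.1 A hA.1).1, hA.2⟩, (hG.1 A hA.1).2⟩, ?_⟩
  obtain ⟨n, g, rfl, rfl⟩ := exists_fin_embedding_map_univ_eq hi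
  obtain ⟨𝒦, -, rfl⟩ := exists_eq_image_mapCompl (U := univ) fun A hA => (hG.1 A hA).1
  have hcard : Fintype.card (Fin (n + 1)) - d - 1 = #(univ.erase (⊤ : Fin (n + 1))) - d := by
    rw [card_erase_of_mem (mem_univ _), card_univ, Nat.sub_right_comm]
  have h𝒦 := hcard ▸ (isShadowMinimal_of_isGotzmannFamily hG).memberSubfamily_top
  rw [decompZero_image_mapCompl (mem_univ _), ← map_erase]
  exact fun _ => h𝒦.ncard_upShadowIn_le fun S hS =>
    subset_erase.2 ⟨subset_univ S, (mem_memberSubfamily.1 hS).2⟩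
end

section
/- Let 𝒜 be a Gotzmann family of d-element subsets of a finite set X, let i ∈ X, and let (𝒜₀, 𝒜₁) be the i-decomposition of 𝒜. Fix a linear order on X ∖ {i}, and let L₀ and L₁ be the lex segments of d-element and (d−1)-element subsets of X ∖ {i} with |L₀| = |𝒜₀| and |L₁| = |𝒜₁|. Then either 𝒜₁ is a Gotzmann family of (d−1)-element subsets of X ∖ {i}, or ∂⁺L₁ ⊆ L₀ (upper shadow taken in X ∖ {i}). -/
/-!
Write `Y = X \ {i}`. The upper shadow of `𝒜` splits into the sets avoiding `i`, which form
`∂⁺𝒜₀`, and the sets containing `i`, which after removing `i` form `𝒜₀ ∪ ∂⁺𝒜₁`. Hence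
`|∂⁺𝒜| ≥ |∂⁺𝒜₀| + |∂⁺𝒜₁| ≥ |∂⁺L₀| + |∂⁺𝒜₁|` by Kruskal–Katona. If `∂⁺L₁ ⊄ L₀`, then
`L₀ ⊆ ∂⁺L₁` since lex segments of the same rank are nested, so the family
`L₀ ∪ {B ∪ {i} : B ∈ L₁}`, which has the size of `𝒜`, has an upper shadow of size
`|∂⁺L₀| + |∂⁺L₁|`. As `𝒜` is Gotzmann, `|∂⁺𝒜₁| ≤ |∂⁺L₁|`, and by Kruskal–Katona again
`|∂⁺L₁|` is at most the upper shadow of any family of the size of `𝒜₁`.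

Kruskal–Katona for upper shadows and lex segments is deduced from Mathlib's version for
shadows and colex initial segments: enumerate `Y` in decreasing order and take complements in
`Y`; this turns lex into colex and upper shadows into shadows.
-/

open Finset
open scoped FinsetFamily

lemma finite_of_forall_subset {α : Type*} (Y : Finset α) {F : Set (Finset α)}
    (hF : ∀ A ∈ F, A ⊆ Y) : F.Finite :=
  Y.powerset.finite_toSet.subset fun A hA => mem_powerset.2 (hF A hA)

section UpperShadow

variable {α : Type*} [DecidableEq α]

lemma subset_and_card_of_mem_upShadowIn {X : Finset α} {F : Set (Finset α)} {e : ℕ}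
    (hF : ∀ A ∈ F, A ⊆ X ∧ #A = e) : ∀ B ∈ upShadowIn X F, B ⊆ X ∧ #B = e + 1 := by
  rintro _ ⟨A, hA, x, hx, hxA, rfl⟩
  exact ⟨insert_subset hx (hF A hA).1, by rw [card_insert_of_notMem hxA, (hF A hA).2]⟩

@[simp]
lemma upShadowIn_empty (F : Set (Finset α)) : upShadowIn ∅ F = ∅ := by
  simp [upShadowIn]

end UpperShadow

section LexOrder

variable {α : Type*} {r : α → α → Prop} {Y : Finset α}

open Classical in
noncomputable def numAbove (r : α → α → Prop) (Y : Finset α) (a : α) : ℕ :=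
  #{b ∈ Y | r a b}

lemma numAbove_lt_numAbove (hr : IsLinearOrderOn r Y) {x y : α} (hx : x ∈ Y) (hy : y ∈ Y)
    (hxy : r x y) : numAbove r Y y < numAbove r Y x := by
  classical
  refine card_lt_card ⟨fun b hb => ?_, fun h => ?_⟩
  · obtain ⟨hbY, hyb⟩ := mem_filter.1 hb
    exact mem_filter.2 ⟨hbY, hr.2.1 x hx y hy b hbY hxy hyb⟩
  · exact hr.1 y hy (mem_filter.1 (h (mem_filter.2 ⟨hy, hxy⟩))).2

lemma numAbove_lt_card (hr : IsLinearOrderOn r Y) {x : α} (hx : x ∈ Y) :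
    numAbove r Y x < #Y := by
  classical
  exact card_lt_card ⟨filter_subset _ _, fun h => hr.1 x hx (mem_filter.1 (h hx)).2⟩

lemma lexLT_total [DecidableEq α] (hr : IsLinearOrderOn r Y) {A B : Finset α} (hA : A ⊆ Y)
    (hB : B ⊆ Y) (hne : A ≠ B) : lexLT r A B ∨ lexLT r B A := by
  obtain ⟨m, hm, hmax⟩ := exists_max_image (symmDiff A B) (numAbove r Y)
    (symmDiff_nonempty.2 hne)
  have hΔY : symmDiff A B ⊆ Y := symmDiff_le_sup.trans (union_subset hA hB)
  -- `m` is the `r`-least element of `A Δ B`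
  have hmin : ∀ y, r y m → (y ∈ A ↔ y ∈ B) := by
    intro y hym
    by_contra hy
    have hyΔ : y ∈ symmDiff A B := mem_symmDiff.2 (by tauto)
    exact (hmax y hyΔ).not_gt (numAbove_lt_numAbove hr (hΔY hyΔ) (hΔY hm) hym)
  rcases mem_symmDiff.1 hm with ⟨hmA, hmB⟩ | ⟨hmB, hmA⟩
  · exact Or.inl ⟨m, hmA, hmB, hmin⟩
  · exact Or.inr ⟨m, hmB, hmA, fun y hy => (hmin y hy).symm⟩

lemma IsLexSegmentFamily.total [DecidableEq α] (hr : IsLinearOrderOn r Y) {e : ℕ}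
    {L L' : Set (Finset α)} (hL : IsLexSegmentFamily r Y e L)
    (hL' : IsLexSegmentFamily r Y e L') : L ⊆ L' ∨ L' ⊆ L := by
  refine or_iff_not_imp_right.2 fun h B hB => ?_
  obtain ⟨B', hB'L', hB'L⟩ := Set.not_subset.1 h
  obtain ⟨hBY, hBe⟩ := hL.1 B hB
  obtain ⟨hB'Y, hB'e⟩ := hL'.1 B' hB'L'
  obtain rfl | hne := eq_or_ne B B'
  · exact hB'L'
  rcases lexLT_total hr hBY hB'Y hne with hlt | hlt
  · exact hL'.2 B' hB'L' B hBY hBe hlt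
  · exact absurd (hL.2 B hB B' hB'Y hB'e hlt) hB'L

end LexOrder

section Transfer

variable {α : Type*} {r : α → α → Prop} {Y : Finset α} {n : ℕ}

structure IsAntitoneEnum (r : α → α → Prop) (Y : Finset α) (φ : α → Fin n) : Prop where
  lt_of_rel : ∀ x ∈ Y, ∀ y ∈ Y, r x y → φ y < φ x
  injOn : Set.InjOn φ Y
  surj : ∀ a, ∃ x ∈ Y, φ x = a

lemma exists_isAntitoneEnum (hr : IsLinearOrderOn r Y) (hY : Y.Nonempty) :
    ∃ φ : α → Fin #Y, IsAntitoneEnum r Y φ := by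
  classical
  let φ : α → Fin #Y := fun x =>
    if hx : x ∈ Y then ⟨numAbove r Y x, numAbove_lt_card hr hx⟩ else ⟨0, hY.card_pos⟩
  have hφ : ∀ x (hx : x ∈ Y), φ x = ⟨numAbove r Y x, numAbove_lt_card hr hx⟩ :=
    fun x hx => dif_pos hx
  have lt_of_rel : ∀ x ∈ Y, ∀ y ∈ Y, r x y → φ y < φ x := fun x hx y hy hxy => by
    rw [hφ x hx, hφ y hy, Fin.mk_lt_mk]
    exact numAbove_lt_numAbove hr hx hy hxy
  have injOn : Set.InjOn φ Y := fun x hx y hy hxy => by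
    by_contra hne
    rcases hr.2.2 x hx y hy hne with h | h
    exacts [(lt_of_rel x hx y hy h).ne' hxy, (lt_of_rel y hy x hx h).ne hxy]
  have himage : Y.image φ = univ :=
    eq_univ_of_card _ (by rw [card_image_of_injOn injOn, Fintype.card_fin])
  exact ⟨φ, lt_of_rel, injOn, fun a => mem_image.1 (himage ▸ mem_univ a)⟩

lemma IsAntitoneEnum.card_eq {φ : α → Fin n} (hφ : IsAntitoneEnum r Y φ) : #Y = n := by
  have himage : Y.image φ = univ :=
    eq_univ_of_forall fun a => by
      obtain ⟨x, hx, rfl⟩ := hφ.surj a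
      exact mem_image_of_mem φ hx
  rw [← card_image_of_injOn hφ.injOn, himage, card_univ, Fintype.card_fin]

variable [DecidableEq α]

def enumCompl (φ : α → Fin n) (Y A : Finset α) : Finset (Fin n) :=
  (Y \ A).image φ

namespace IsAntitoneEnum

variable {φ : α → Fin n}

lemma mem_enumCompl (hφ : IsAntitoneEnum r Y φ) {A : Finset α} {x : α} (hx : x ∈ Y) :
    φ x ∈ enumCompl φ Y A ↔ x ∉ A := by
  simp only [enumCompl, mem_image, mem_sdiff]
  constructor
  · rintro ⟨y, ⟨hyY, hyA⟩, hyx⟩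
    rwa [← hφ.injOn hyY hx hyx]
  · exact fun hxA => ⟨x, ⟨hx, hxA⟩, rfl⟩

lemma card_enumCompl (hφ : IsAntitoneEnum r Y φ) {A : Finset α} (hA : A ⊆ Y) :
    #(enumCompl φ Y A) = n - #A := by
  rw [enumCompl, card_image_of_injOn (hφ.injOn.mono (by simp)), card_sdiff_of_subset hA,
    hφ.card_eq]

lemma enumCompl_injOn (hφ : IsAntitoneEnum r Y φ) :
    Set.InjOn (enumCompl φ Y) {A | A ⊆ Y} := fun A hA B hB h => by
  ext x
  by_cases hx : x ∈ Y
  · rw [← not_iff_not, ← hφ.mem_enumCompl hx, ← hφ.mem_enumCompl hx, h]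
  · exact iff_of_false (fun h => hx (hA h)) (fun h => hx (hB h))

lemma exists_enumCompl_eq (hφ : IsAntitoneEnum r Y φ) (t : Finset (Fin n)) :
    ∃ A ⊆ Y, enumCompl φ Y A = t := by
  classical
  refine ⟨{x ∈ Y | φ x ∉ t}, filter_subset _ _, ext fun a => ?_⟩
  obtain ⟨x, hx, rfl⟩ := hφ.surj a
  rw [hφ.mem_enumCompl hx, mem_filter]
  tauto

lemma enumCompl_insert (hφ : IsAntitoneEnum r Y φ) {A : Finset α} {x : α} (hx : x ∈ Y) :
    enumCompl φ Y (insert x A) = (enumCompl φ Y A).erase (φ x) := by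
  ext a
  obtain ⟨y, hy, rfl⟩ := hφ.surj a
  rw [mem_erase, ne_eq, hφ.mem_enumCompl hy, hφ.mem_enumCompl hy, mem_insert,
    hφ.injOn.eq_iff hy hx]
  tauto

lemma toColex_lt_of_lexLT (hr : IsLinearOrderOn r Y) (hφ : IsAntitoneEnum r Y φ)
    {A B : Finset α} (hA : A ⊆ Y) (hAB : lexLT r A B) :
    toColex (enumCompl φ Y A) < toColex (enumCompl φ Y B) := by
  obtain ⟨x, hxA, hxB, hmin⟩ := hAB
  have hxY := hA hxA
  refine Colex.toColex_lt_toColex_iff_exists_forall_lt.2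
    ⟨φ x, (hφ.mem_enumCompl hxY).2 hxB, fun h => (hφ.mem_enumCompl hxY).1 h hxA, ?_⟩
  intro b hbA hbB
  obtain ⟨y, hyYA, rfl⟩ := mem_image.1 hbA
  obtain ⟨hyY, hyA⟩ := mem_sdiff.1 hyYA
  have hyB : y ∈ B := not_not.1 fun h => hbB ((hφ.mem_enumCompl hyY).2 h)
  have hyx : y ≠ x := fun h => hxB (h ▸ hyB)
  rcases hr.2.2 x hxY y hyY hyx.symm with h | h
  · exact hφ.lt_of_rel x hxY y hyY h
  · exact absurd ((hmin y h).2 hyB) hyA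

lemma lexLT_iff_toColex_lt (hr : IsLinearOrderOn r Y) (hφ : IsAntitoneEnum r Y φ)
    {A B : Finset α} (hA : A ⊆ Y) (hB : B ⊆ Y) :
    lexLT r A B ↔ toColex (enumCompl φ Y A) < toColex (enumCompl φ Y B) := by
  refine ⟨hφ.toColex_lt_of_lexLT hr hA, fun h => ?_⟩
  have hne : A ≠ B := by rintro rfl; exact h.false
  exact (lexLT_total hr hA hB hne).resolve_right fun h' =>
    (hφ.toColex_lt_of_lexLT hr hB h').asymm h

end IsAntitoneEnum

variable {φ : α → Fin n} {F : Set (Finset α)} {e : ℕ}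

noncomputable def enumComplFamily (φ : α → Fin n) (Y : Finset α) (F : Set (Finset α)) :
    Finset (Finset (Fin n)) :=
  (Set.toFinite (enumCompl φ Y '' F)).toFinset

lemma mem_enumComplFamily {t : Finset (Fin n)} :
    t ∈ enumComplFamily φ Y F ↔ ∃ A ∈ F, enumCompl φ Y A = t :=
  Set.Finite.mem_toFinset _

namespace IsAntitoneEnum

lemma enumCompl_mem_enumComplFamily_iff (hφ : IsAntitoneEnum r Y φ) (hF : ∀ A ∈ F, A ⊆ Y)
    {A : Finset α} (hA : A ⊆ Y) : enumCompl φ Y A ∈ enumComplFamily φ Y F ↔ A ∈ F := by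
  refine ⟨fun h => ?_, fun h => mem_enumComplFamily.2 ⟨A, h, rfl⟩⟩
  obtain ⟨B, hB, hBA⟩ := mem_enumComplFamily.1 h
  rwa [← hφ.enumCompl_injOn (hF B hB) hA hBA]

lemma card_enumComplFamily (hφ : IsAntitoneEnum r Y φ) (hF : ∀ A ∈ F, A ⊆ Y) :
    #(enumComplFamily φ Y F) = F.ncard := by
  rw [← Set.ncard_coe_finset, enumComplFamily, Set.Finite.coe_toFinset,
    (hφ.enumCompl_injOn.mono hF).ncard_image]

lemma shadow_enumComplFamily (hφ : IsAntitoneEnum r Y φ) :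
    ∂ (enumComplFamily φ Y F) = enumComplFamily φ Y (upShadowIn Y F) := by
  ext t
  simp only [mem_shadow_iff, mem_enumComplFamily, upShadowIn]
  constructor
  · rintro ⟨_, ⟨A, hA, rfl⟩, a, ha, rfl⟩
    obtain ⟨x, hx, rfl⟩ := mem_image.1 ha
    obtain ⟨hxY, hxA⟩ := mem_sdiff.1 hx
    exact ⟨insert x A, ⟨A, hA, x, hxY, hxA, rfl⟩, hφ.enumCompl_insert hxY⟩
  · rintro ⟨_, ⟨A, hA, x, hxY, hxA, rfl⟩, rfl⟩
    exact ⟨enumCompl φ Y A, ⟨A, hA, rfl⟩, φ x, (hφ.mem_enumCompl hxY).2 hxA,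
      (hφ.enumCompl_insert hxY).symm⟩

lemma sized_enumComplFamily (hφ : IsAntitoneEnum r Y φ) (hF : ∀ A ∈ F, A ⊆ Y ∧ #A = e) :
    (enumComplFamily φ Y F : Set (Finset (Fin n))).Sized (n - e) := by
  intro t ht
  obtain ⟨A, hA, rfl⟩ := mem_enumComplFamily.1 ht
  rw [hφ.card_enumCompl (hF A hA).1, (hF A hA).2]

lemma isInitSeg_enumComplFamily_iff (hr : IsLinearOrderOn r Y) (hφ : IsAntitoneEnum r Y φ)
    (hF : ∀ A ∈ F, A ⊆ Y ∧ #A = e) :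
    Colex.IsInitSeg (enumComplFamily φ Y F) (n - e) ↔ IsLexSegmentFamily r Y e F := by
  have hFY : ∀ A ∈ F, A ⊆ Y := fun A hA => (hF A hA).1
  constructor
  · rintro ⟨-, hinit⟩
    refine ⟨hF, fun B hB A hAY hAe hAB => ?_⟩
    rw [← hφ.enumCompl_mem_enumComplFamily_iff hFY hAY]
    exact hinit ((hφ.enumCompl_mem_enumComplFamily_iff hFY (hFY B hB)).2 hB)
      ⟨(hφ.lexLT_iff_toColex_lt hr hAY (hFY B hB)).1 hAB, by rw [hφ.card_enumCompl hAY, hAe]⟩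
  · refine fun hL => ⟨hφ.sized_enumComplFamily hF, fun s t hs ⟨hts, htcard⟩ => ?_⟩
    obtain ⟨B, hB, rfl⟩ := mem_enumComplFamily.1 hs
    obtain ⟨A, hAY, rfl⟩ := hφ.exists_enumCompl_eq t
    have hAe : #A = e := by
      have := card_le_card hAY
      have := card_le_card (hF B hB).1
      have := (hF B hB).2
      have := hφ.card_eq
      rw [hφ.card_enumCompl hAY] at htcard
      omega
    rw [hφ.enumCompl_mem_enumComplFamily_iff hFY hAY]
    exact hL.2 B hB A hAY hAe ((hφ.lexLT_iff_toColex_lt hr hAY (hFY B hB)).2 hts)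

end IsAntitoneEnum

end Transfer

section KruskalKatona

variable {α : Type*} [DecidableEq α] {r : α → α → Prop} {Y : Finset α} {e : ℕ}
  {L : Set (Finset α)}

lemma ncard_upShadowIn_le_of_isLexSegmentFamily (hr : IsLinearOrderOn r Y)
    (hL : IsLexSegmentFamily r Y e L) {ℬ : Set (Finset α)} (hℬ : ∀ B ∈ ℬ, B ⊆ Y ∧ #B = e)
    (hcard : L.ncard ≤ ℬ.ncard) : (upShadowIn Y L).ncard ≤ (upShadowIn Y ℬ).ncard := by
  obtain rfl | hY := Y.eq_empty_or_nonempty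
  · simp
  obtain ⟨φ, hφ⟩ := exists_isAntitoneEnum hr hY
  have hLY : ∀ A ∈ L, A ⊆ Y := fun A hA => (hL.1 A hA).1
  have hℬY : ∀ B ∈ ℬ, B ⊆ Y := fun B hB => (hℬ B hB).1
  have hkk := kruskal_katona (hφ.sized_enumComplFamily hℬ)
    (by rwa [hφ.card_enumComplFamily hLY, hφ.card_enumComplFamily hℬY])
    ((hφ.isInitSeg_enumComplFamily_iff hr hL.1).2 hL)
  rwa [hφ.shadow_enumComplFamily, hφ.shadow_enumComplFamily,
    hφ.card_enumComplFamily fun A hA => (subset_and_card_of_mem_upShadowIn hL.1 A hA).1,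
    hφ.card_enumComplFamily fun B hB => (subset_and_card_of_mem_upShadowIn hℬ B hB).1] at hkk

lemma IsLexSegmentFamily.upShadow (hr : IsLinearOrderOn r Y) (hL : IsLexSegmentFamily r Y e L) :
    IsLexSegmentFamily r Y (e + 1) (upShadowIn Y L) := by
  obtain rfl | hY := Y.eq_empty_or_nonempty
  · rw [upShadowIn_empty]
    exact ⟨by simp, by simp⟩
  obtain ⟨φ, hφ⟩ := exists_isAntitoneEnum hr hY
  rw [← hφ.isInitSeg_enumComplFamily_iff hr (subset_and_card_of_mem_upShadowIn hL.1),
    ← hφ.shadow_enumComplFamily, show #Y - (e + 1) = #Y - e - 1 by omega]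
  exact ((hφ.isInitSeg_enumComplFamily_iff hr hL.1).2 hL).shadow

end KruskalKatona

section Decomposition

variable {α : Type*} [DecidableEq α] {i : α} {X : Finset α} {d e : ℕ}
  {𝒜 𝒜₀ 𝒜₁ : Set (Finset α)}

lemma finite_upShadowIn (h𝒜 : ∀ A ∈ 𝒜, A ⊆ X) : (upShadowIn X 𝒜).Finite :=
  finite_of_forall_subset X <| by
    rintro _ ⟨A, hA, x, hx, -, rfl⟩
    exact insert_subset hx (h𝒜 A hA)

lemma subset_and_card_of_mem_decompZero (h𝒜 : ∀ A ∈ 𝒜, A ⊆ X ∧ #A = d) :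
    ∀ A ∈ decompZero i 𝒜, A ⊆ X.erase i ∧ #A = d := by
  rintro A ⟨hA, hiA⟩
  exact ⟨fun x hx => mem_erase.2 ⟨fun h => hiA (h ▸ hx), (h𝒜 A hA).1 hx⟩, (h𝒜 A hA).2⟩

lemma subset_and_card_of_mem_decompOne (h𝒜 : ∀ A ∈ 𝒜, A ⊆ X ∧ #A = d) :
    ∀ B ∈ decompOne i 𝒜, B ⊆ X.erase i ∧ #B = d - 1 := by
  rintro _ ⟨A, hA, hiA, rfl⟩
  exact ⟨erase_subset_erase i (h𝒜 A hA).1, by rw [card_erase_of_mem hiA, (h𝒜 A hA).2]⟩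

lemma decompOne_eq_image (i : α) (𝒜 : Set (Finset α)) :
    decompOne i 𝒜 = (·.erase i) '' (𝒜 ∩ {A | i ∈ A}) := by
  ext B
  simp [decompOne, and_assoc, eq_comm]

lemma ncard_decompZero_add_ncard_decompOne (i : α) (h𝒜 : 𝒜.Finite) :
    (decompZero i 𝒜).ncard + (decompOne i 𝒜).ncard = 𝒜.ncard := by
  rw [decompOne_eq_image, ((erase_injOn' i).mono Set.inter_subset_right).ncard_image, add_comm]
  exact Set.ncard_inter_add_ncard_sdiff_eq_ncard 𝒜 {A | i ∈ A} h𝒜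

lemma decompZero_upShadowIn (i : α) (X : Finset α) (𝒜 : Set (Finset α)) :
    decompZero i (upShadowIn X 𝒜) = upShadowIn (X.erase i) (decompZero i 𝒜) := by
  ext B
  constructor
  · rintro ⟨⟨A, hA, x, hx, hxA, rfl⟩, hiB⟩
    have hxi : x ≠ i := fun h => hiB (h ▸ mem_insert_self x A)
    exact ⟨A, ⟨hA, fun h => hiB (mem_insert_of_mem h)⟩, x, mem_erase.2 ⟨hxi, hx⟩, hxA, rfl⟩
  · rintro ⟨A, ⟨hA, hiA⟩, x, hx, hxA, rfl⟩
    obtain ⟨hxi, hxX⟩ := mem_erase.1 hx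
    exact ⟨⟨A, hA, x, hxX, hxA, rfl⟩, by simp [hiA, hxi.symm]⟩

lemma decompOne_upShadowIn (hi : i ∈ X) (𝒜 : Set (Finset α)) :
    decompOne i (upShadowIn X 𝒜) =
      decompZero i 𝒜 ∪ upShadowIn (X.erase i) (decompOne i 𝒜) := by
  ext C
  constructor
  · rintro ⟨_, ⟨A, hA, x, hx, hxA, rfl⟩, hiB, rfl⟩
    obtain rfl | hxi := eq_or_ne x i
    · rw [erase_insert hxA]
      exact Or.inl ⟨hA, hxA⟩
    · have hiA : i ∈ A := (mem_insert.1 hiB).resolve_left hxi.symm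
      refine Or.inr ⟨A.erase i, ⟨A, hA, hiA, rfl⟩, x, mem_erase.2 ⟨hxi, hx⟩,
        fun h => hxA (mem_of_mem_erase h), ?_⟩
      rw [erase_insert_of_ne hxi]
  · rintro (⟨hA, hiA⟩ | ⟨_, ⟨A, hA, hiA, rfl⟩, x, hx, hxA, rfl⟩)
    · exact ⟨insert i C, ⟨C, hA, i, hi, hiA, rfl⟩, mem_insert_self i C,
        (erase_insert hiA).symm⟩
    · obtain ⟨hxi, hxX⟩ := mem_erase.1 hx
      exact ⟨insert x A, ⟨A, hA, x, hxX, fun h => hxA (mem_erase.2 ⟨hxi, h⟩), rfl⟩,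
        mem_insert_of_mem hiA, (erase_insert_of_ne hxi).symm⟩

lemma ncard_upShadowIn_eq (hi : i ∈ X) (h𝒜 : ∀ A ∈ 𝒜, A ⊆ X) :
    (upShadowIn X 𝒜).ncard = (upShadowIn (X.erase i) (decompZero i 𝒜)).ncard +
      (decompZero i 𝒜 ∪ upShadowIn (X.erase i) (decompOne i 𝒜)).ncard := by
  rw [← ncard_decompZero_add_ncard_decompOne i (finite_upShadowIn h𝒜), decompZero_upShadowIn,
    decompOne_upShadowIn hi]

def ofDecomp (i : α) (𝒜₀ 𝒜₁ : Set (Finset α)) : Set (Finset α) :=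
  𝒜₀ ∪ insert i '' 𝒜₁

lemma decompZero_ofDecomp (h₀ : ∀ A ∈ 𝒜₀, i ∉ A) : decompZero i (ofDecomp i 𝒜₀ 𝒜₁) = 𝒜₀ := by
  ext A
  constructor
  · rintro ⟨hA | ⟨B, -, rfl⟩, hiA⟩
    exacts [hA, absurd (mem_insert_self i B) hiA]
  · exact fun hA => ⟨Or.inl hA, h₀ A hA⟩

lemma decompOne_ofDecomp (h₀ : ∀ A ∈ 𝒜₀, i ∉ A) (h₁ : ∀ B ∈ 𝒜₁, i ∉ B) :
    decompOne i (ofDecomp i 𝒜₀ 𝒜₁) = 𝒜₁ := by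
  ext C
  constructor
  · rintro ⟨A, hA | ⟨B, hB, rfl⟩, hiA, rfl⟩
    exacts [absurd hiA (h₀ A hA), by rwa [erase_insert (h₁ B hB)]]
  · exact fun hC => ⟨insert i C, Or.inr ⟨C, hC, rfl⟩, mem_insert_self i C,
      (erase_insert (h₁ C hC)).symm⟩

lemma subset_and_card_of_mem_ofDecomp (hi : i ∈ X)
    (h₀ : ∀ A ∈ 𝒜₀, A ⊆ X.erase i ∧ #A = e + 1) (h₁ : ∀ B ∈ 𝒜₁, B ⊆ X.erase i ∧ #B = e) :
    ∀ C ∈ ofDecomp i 𝒜₀ 𝒜₁, C ⊆ X ∧ #C = e + 1 := by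
  rintro C (hC | ⟨B, hB, rfl⟩)
  · exact ⟨(h₀ C hC).1.trans (erase_subset i X), (h₀ C hC).2⟩
  · have hiB : i ∉ B := fun h => notMem_erase i X ((h₁ B hB).1 h)
    exact ⟨insert_subset hi ((h₁ B hB).1.trans (erase_subset i X)),
      by rw [card_insert_of_notMem hiB, (h₁ B hB).2]⟩

end Decomposition

lemma isGotzmannFamily_empty {α : Type*} [DecidableEq α] (X : Finset α) (d : ℕ) :
    IsGotzmannFamily X d ∅ :=
  ⟨by simp, fun _ _ _ => by simp [upShadowIn]⟩

lemma IsGotzmannFamily.ncard_upShadowIn_decompOne_le {α : Type*} [DecidableEq α]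
    {r : α → α → Prop} {X : Finset α} {e : ℕ} {𝒜 L₀ L₁ : Set (Finset α)} {i : α} (hi : i ∈ X)
    (hG : IsGotzmannFamily X (e + 1) 𝒜) (hr : IsLinearOrderOn r (X.erase i))
    (hL₀ : IsLexSegmentFamily r (X.erase i) (e + 1) L₀)
    (hL₀c : L₀.ncard = (decompZero i 𝒜).ncard)
    (hL₁ : ∀ B ∈ L₁, B ⊆ X.erase i ∧ #B = e) (hL₁c : L₁.ncard = (decompOne i 𝒜).ncard)
    (hL₀₁ : L₀ ⊆ upShadowIn (X.erase i) L₁) :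
    (upShadowIn (X.erase i) (decompOne i 𝒜)).ncard ≤ (upShadowIn (X.erase i) L₁).ncard := by
  have h𝒜X : ∀ A ∈ 𝒜, A ⊆ X := fun A hA => (hG.1 A hA).1
  have h𝒜₀ := subset_and_card_of_mem_decompZero (i := i) hG.1
  have h𝒜₁ := subset_and_card_of_mem_decompOne (i := i) hG.1
  have hiL₀ : ∀ A ∈ L₀, i ∉ A := fun A hA h => notMem_erase i X ((hL₀.1 A hA).1 h)
  have hiL₁ : ∀ B ∈ L₁, i ∉ B := fun B hB h => notMem_erase i X ((hL₁ B hB).1 h)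
  have h𝒞 := subset_and_card_of_mem_ofDecomp hi hL₀.1 hL₁
  have h𝒞X : ∀ C ∈ ofDecomp i L₀ L₁, C ⊆ X := fun C hC => (h𝒞 C hC).1
  have h𝒞c : (ofDecomp i L₀ L₁).ncard = 𝒜.ncard := by
    rw [← ncard_decompZero_add_ncard_decompOne i (finite_of_forall_subset X h𝒞X),
      ← ncard_decompZero_add_ncard_decompOne i (finite_of_forall_subset X h𝒜X),
      decompZero_ofDecomp hiL₀, decompOne_ofDecomp hiL₀ hiL₁, hL₀c, hL₁c]
  have hGot := hG.2 _ h𝒞 h𝒞c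
  rw [ncard_upShadowIn_eq hi h𝒜X, ncard_upShadowIn_eq hi h𝒞X, decompZero_ofDecomp hiL₀,
    decompOne_ofDecomp hiL₀ hiL₁, Set.union_eq_self_of_subset_left hL₀₁] at hGot
  have hKK := ncard_upShadowIn_le_of_isLexSegmentFamily hr hL₀ h𝒜₀ hL₀c.le
  have hunion := Set.ncard_le_ncard (Set.subset_union_right (s := decompZero i 𝒜))
    ((finite_of_forall_subset _ fun A hA => (h𝒜₀ A hA).1).union
      (finite_upShadowIn fun B hB => (h𝒜₁ B hB).1))
  omega

/-- **Lemma.** Let `𝒜` be Gotzmann in `X`, `i ∈ X`, and let `L₀, L₁` be the lex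
segments (for a linear order on `X \ {i}`) with the same cardinalities as the parts
`𝒜₀, 𝒜₁` of the `i`-decomposition of `𝒜`.  Then either `𝒜₁` is Gotzmann in
`X \ {i}`, or `∂⁺L₁ ⊆ L₀`. -/
theorem decompOne_gotzmann_or_shadow_le {α : Type*} [DecidableEq α]
    (X : Finset α) (d : ℕ) (𝒜 : Set (Finset α)) (i : α) (hi : i ∈ X)
    (hG : IsGotzmannFamily X d 𝒜)
    (r : α → α → Prop) (hr : IsLinearOrderOn r (X.erase i))
    (L₀ L₁ : Set (Finset α))
    (hL₀ : IsLexSegmentFamily r (X.erase i) d L₀)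
    (hL₀c : L₀.ncard = (decompZero i 𝒜).ncard)
    (hL₁ : IsLexSegmentFamily r (X.erase i) (d - 1) L₁)
    (hL₁c : L₁.ncard = (decompOne i 𝒜).ncard) :
    IsGotzmannFamily (X.erase i) (d - 1) (decompOne i 𝒜) ∨
      upShadowIn (X.erase i) L₁ ⊆ L₀ := by
  rcases (decompOne i 𝒜).eq_empty_or_nonempty with h𝒜₁ | ⟨_, A, hA, hiA, -⟩
  · exact Or.inl (h𝒜₁ ▸ isGotzmannFamily_empty _ _)
  obtain ⟨e, rfl⟩ : ∃ e, d = e + 1 :=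
    Nat.exists_eq_add_one.2 ((hG.1 A hA).2 ▸ card_pos.2 ⟨i, hiA⟩)
  rw [Nat.add_sub_cancel] at hL₁ ⊢
  by_cases hsub : upShadowIn (X.erase i) L₁ ⊆ L₀
  · exact Or.inr hsub
  have hL₀₁ : L₀ ⊆ upShadowIn (X.erase i) L₁ :=
    (hL₀.total hr (hL₁.upShadow hr)).resolve_right hsub
  refine Or.inl ⟨subset_and_card_of_mem_decompOne hG.1, fun ℬ hℬ hcard => ?_⟩
  calc (upShadowIn (X.erase i) (decompOne i 𝒜)).ncard
      ≤ (upShadowIn (X.erase i) L₁).ncard :=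
        hG.ncard_upShadowIn_decompOne_le hi hr hL₀ hL₀c hL₁.1 hL₁c hL₀₁
    _ ≤ (upShadowIn (X.erase i) ℬ).ncard :=
        ncard_upShadowIn_le_of_isLexSegmentFamily hr hL₁ hℬ (hL₁c.trans hcard.symm).le
end

section
/- Let 𝒜 be a Gotzmann family of d-element subsets of a finite set X, let i ∈ X, and let (𝒜₀, 𝒜₁) be the i-decomposition of 𝒜. Fix a linear order on X ∖ {i}, and let L₀ and L₁ be the lex segments of d-element and (d−1)-element subsets of X ∖ {i} with |L₀| = |𝒜₀| and |L₁| = |𝒜₁|. If ∂⁺L₁ ⊆ L₀ (upper shadow taken in X ∖ {i}), then for every A ∈ 𝒜 with i ∈ A and every j ∈ X ∖ A, the set (A ∖ {i}) ∪ {j} belongs to 𝒜. -/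
open Finset Finset.Colex
open scoped FinsetFamily symmDiff

namespace Finset

variable {α : Type*} [DecidableEq α]

def upShadowWithin (Y : Finset α) (𝒜 : Finset (Finset α)) : Finset (Finset α) :=
  𝒜.biUnion fun A => (Y \ A).image (insert · A)

section UpShadowWithin

variable {X Y : Finset α} {𝒜 : Finset (Finset α)} {B : Finset α} {i : α}

lemma mem_upShadowWithin :
    B ∈ upShadowWithin Y 𝒜 ↔ ∃ A ∈ 𝒜, ∃ x ∈ Y, x ∉ A ∧ insert x A = B := by
  simp [upShadowWithin, and_assoc]

lemma coe_upShadowWithin (Y : Finset α) (𝒜 : Finset (Finset α)) :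
    (upShadowWithin Y 𝒜 : Set (Finset α)) = upShadowIn Y 𝒜 := by
  ext B
  simp [mem_upShadowWithin, upShadowIn, eq_comm]

@[simp]
lemma upShadowWithin_empty_left (𝒜 : Finset (Finset α)) : upShadowWithin ∅ 𝒜 = ∅ := by
  ext; simp [upShadowWithin]

@[simp]
lemma upShadowWithin_empty_right (Y : Finset α) : upShadowWithin Y ∅ = ∅ := by
  simp [upShadowWithin]

lemma subset_of_mem_upShadowWithin (h𝒜 : ∀ A ∈ 𝒜, A ⊆ Y) (hB : B ∈ upShadowWithin Y 𝒜) :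
    B ⊆ Y := by
  obtain ⟨A, hA, x, hx, -, rfl⟩ := mem_upShadowWithin.1 hB
  exact insert_subset hx (h𝒜 A hA)

lemma nonMemberSubfamily_upShadowWithin :
    (upShadowWithin X 𝒜).nonMemberSubfamily i =
      upShadowWithin (X.erase i) (𝒜.nonMemberSubfamily i) := by
  ext B
  simp only [mem_nonMemberSubfamily, mem_upShadowWithin, mem_erase]
  constructor
  · rintro ⟨⟨A, hA, x, hx, hxA, rfl⟩, hiB⟩
    rw [mem_insert, not_or] at hiB
    exact ⟨A, ⟨hA, hiB.2⟩, x, ⟨Ne.symm hiB.1, hx⟩, hxA, rfl⟩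
  · rintro ⟨A, ⟨hA, hiA⟩, x, ⟨hxi, hx⟩, hxA, rfl⟩
    exact ⟨⟨A, hA, x, hx, hxA, rfl⟩, by simp [hiA, hxi.symm]⟩

lemma memberSubfamily_upShadowWithin (hi : i ∈ X) :
    (upShadowWithin X 𝒜).memberSubfamily i =
      𝒜.nonMemberSubfamily i ∪ upShadowWithin (X.erase i) (𝒜.memberSubfamily i) := by
  ext B
  simp only [mem_memberSubfamily, mem_nonMemberSubfamily, mem_union, mem_upShadowWithin,
    mem_erase]
  constructor
  · rintro ⟨⟨A, hA, x, hx, hxA, hAB⟩, hiB⟩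
    have hB : B = (insert x A).erase i := by rw [hAB, erase_insert hiB]
    rcases eq_or_ne x i with rfl | hxi
    · exact Or.inl ⟨by rwa [hB, erase_insert hxA], hiB⟩
    · have hiA : i ∈ A := by
        have := mem_insert_self i B
        rw [← hAB, mem_insert] at this
        exact this.resolve_left hxi.symm
      refine Or.inr ⟨A.erase i, ⟨by rwa [insert_erase hiA], notMem_erase i A⟩, x, ⟨hxi, hx⟩,
        fun h => hxA (mem_of_mem_erase h), ?_⟩
      rw [hB, erase_insert_of_ne hxi]
  · rintro (⟨hB, hiB⟩ | ⟨A, ⟨hA, hiA⟩, x, ⟨hxi, hx⟩, hxA, rfl⟩)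
    · exact ⟨⟨B, hB, i, hi, hiB, rfl⟩, hiB⟩
    · refine ⟨⟨insert i A, hA, x, hx, by simp [hxi, hxA], insert_comm x i A⟩, ?_⟩
      simp [hxi.symm, hiA]

lemma card_upShadowWithin_eq (hi : i ∈ X) :
    #(upShadowWithin X 𝒜) = #(upShadowWithin (X.erase i) (𝒜.nonMemberSubfamily i)) +
      #(𝒜.nonMemberSubfamily i ∪ upShadowWithin (X.erase i) (𝒜.memberSubfamily i)) := by
  rw [← card_memberSubfamily_add_card_nonMemberSubfamily i, memberSubfamily_upShadowWithin hi,
    nonMemberSubfamily_upShadowWithin, add_comm]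

lemma nonMemberSubfamily_union_image_insert_s14 {L₀ L₁ : Finset (Finset α)} (h₀ : ∀ B ∈ L₀, i ∉ B) :
    (L₀ ∪ L₁.image (insert i)).nonMemberSubfamily i = L₀ := by
  rw [nonMemberSubfamily_union, nonMemberSubfamily_image_insert, union_empty]
  exact filter_true_of_mem h₀

lemma memberSubfamily_union_image_insert_s14 {L₀ L₁ : Finset (Finset α)} (h₀ : ∀ B ∈ L₀, i ∉ B)
    (h₁ : ∀ B ∈ L₁, i ∉ B) : (L₀ ∪ L₁.image (insert i)).memberSubfamily i = L₁ := by
  have hL₀ : L₀.nonMemberSubfamily i = L₀ := filter_true_of_mem h₀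
  rw [memberSubfamily_union, memberSubfamily_image_insert h₁, ← hL₀,
    memberSubfamily_nonMemberSubfamily, empty_union]

end UpShadowWithin

lemma toColex_compl_lt_toColex_compl {β : Type*} [Fintype β] [LinearOrder β] {s t : Finset β} :
    toColex sᶜ < toColex tᶜ ↔ toColex t < toColex s := by
  simp only [toColex_lt_toColex_iff_exists_forall_lt, mem_compl, not_not]
  exact exists_congr fun a => ⟨fun ⟨h₁, h₂, h₃⟩ => ⟨h₂, h₁, fun b hb hb' => h₃ b hb' hb⟩,
    fun ⟨h₁, h₂, h₃⟩ => ⟨h₂, h₁, fun b hb hb' => h₃ b hb' hb⟩⟩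

theorem card_upShadow_le_of_isInitSeg_compls {n e : ℕ} {𝒜 𝒞 : Finset (Finset (Fin n))}
    (h𝒜 : (𝒜 : Set (Finset (Fin n))).Sized e) (hcard : #𝒞 ≤ #𝒜)
    (h𝒞 : IsInitSeg 𝒞ᶜˢ (n - e)) : #(∂⁺ 𝒞) ≤ #(∂⁺ 𝒜) := by
  simpa using kruskal_katona (𝒜 := 𝒜ᶜˢ) (by simpa using h𝒜.compls) (by simpa using hcard) h𝒞

end Finset

namespace IsLinearOrderOn

variable {α : Type*} {r : α → α → Prop} {Y : Finset α} {a b : α}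

lemma card_filter_lt_card [DecidableRel r] (hr : IsLinearOrderOn r Y) (ha : a ∈ Y) :
    #{c ∈ Y | r a c} < #Y :=
  card_lt_card (filter_ssubset.2 ⟨a, ha, hr.1 a ha⟩)

lemma card_filter_lt_card_filter [DecidableRel r] (hr : IsLinearOrderOn r Y) (ha : a ∈ Y)
    (hb : b ∈ Y) (hab : r a b) : #{c ∈ Y | r b c} < #{c ∈ Y | r a c} := by
  refine card_lt_card ⟨fun c hc => ?_, fun h => ?_⟩
  · rw [mem_filter] at hc ⊢
    exact ⟨hc.1, hr.2.1 a ha b hb c hc.1 hab hc.2⟩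
  · exact hr.1 b hb (mem_filter.1 (h (mem_filter.2 ⟨hb, hab⟩))).2

theorem exists_bijOn_fin (hr : IsLinearOrderOn r Y) (hY : Y.Nonempty) :
    ∃ g : α → Fin #Y, Set.BijOn g Y Set.univ ∧ ∀ a ∈ Y, ∀ b ∈ Y, r a b → g b < g a := by
  classical
  let g : α → Fin #Y := fun a =>
    if ha : a ∈ Y then ⟨#{c ∈ Y | r a c}, hr.card_filter_lt_card ha⟩ else ⟨0, hY.card_pos⟩
  have hg : ∀ a ∈ Y, ∀ b ∈ Y, r a b → g b < g a := fun a ha b hb hab => by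
    simpa [g, ha, hb, Fin.lt_def] using hr.card_filter_lt_card_filter ha hb hab
  have hinj : Set.InjOn g Y := fun a ha b hb hab => by
    by_contra hne
    rcases hr.2.2 a ha b hb hne with h | h
    · exact (hg a ha b hb h).ne hab.symm
    · exact (hg b hb a ha h).ne hab
  refine ⟨g, ⟨fun _ _ => Set.mem_univ _, hinj, ?_⟩, hg⟩
  simpa using surjOn_of_injOn_of_card_le g (t := univ) (fun _ _ => mem_univ _) hinj (by simp)

end IsLinearOrderOn

lemma Set.InjOn.mem_finsetImage_iff {α β : Type*} [DecidableEq β] {f : α → β} {s t : Finset α}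
    {x : α} (hf : Set.InjOn f s) (ht : t ⊆ s) (hx : x ∈ s) : f x ∈ t.image f ↔ x ∈ t := by
  rw [← mem_coe, coe_image, hf.mem_image_iff (Finset.coe_subset.2 ht) hx, mem_coe]

namespace Finset

lemma image_filter_mem_eq {α β : Type*} [DecidableEq β] {Y : Finset α} {g : α → β}
    {t : Finset β} (hg : Set.SurjOn g Y t) : {x ∈ Y | g x ∈ t}.image g = t := by
  ext m
  simp only [mem_image, mem_filter]
  refine ⟨fun ⟨x, ⟨_, hx⟩, hxm⟩ => hxm ▸ hx, fun hm => ?_⟩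
  obtain ⟨x, hx, rfl⟩ := hg hm
  exact ⟨x, ⟨hx, hm⟩, rfl⟩

section Transport

variable {α : Type*} [DecidableEq α] {Y : Finset α} {r : α → α → Prop}

lemma lexLT_of_toColex_image_lt {β : Type*} [LinearOrder β] {g : α → β} (hg : Set.InjOn g Y)
    (hgr : ∀ a ∈ Y, ∀ b ∈ Y, r a b → g b < g a) {A B : Finset α} (hA : A ⊆ Y) (hB : B ⊆ Y)
    (h : toColex (B.image g) < toColex (A.image g)) : lexLT r A B := by
  -- `g` maps the `r`-least element of `A ∆ B` to the largest element of `g B ∆ g A`.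
  obtain ⟨hne, hmax⟩ := toColex_lt_toColex_iff_max'_mem.1 h
  set m := (B.image g ∆ A.image g).max' (symmDiff_nonempty.2 hne)
  have hmB : m ∉ B.image g := by
    have := max'_mem _ (symmDiff_nonempty.2 hne)
    rw [mem_symmDiff] at this
    tauto
  obtain ⟨x, hxA, hxm⟩ := mem_image.1 hmax
  refine ⟨x, hxA, fun hxB => hmB (hxm ▸ mem_image_of_mem g hxB), fun y hyx => ?_⟩
  by_contra hy
  have hyY : y ∈ Y := by
    by_cases hyA : y ∈ A
    exacts [hA hyA, hB (by tauto)]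
  have hgy : g y ∈ B.image g ∆ A.image g := by
    rw [mem_symmDiff, hg.mem_finsetImage_iff hA hyY, hg.mem_finsetImage_iff hB hyY]
    tauto
  exact (hgr y hyY x (hA hxA) hyx).not_ge (hxm ▸ le_max' _ _ hgy)

variable {n : ℕ} {g : α → Fin n}

lemma image_upShadowWithin (hg : Set.BijOn g Y Set.univ) {𝒬 : Finset (Finset α)}
    (h𝒬 : ∀ A ∈ 𝒬, A ⊆ Y) :
    (upShadowWithin Y 𝒬).image (image g) = ∂⁺ (𝒬.image (image g)) := by
  ext T
  simp only [mem_image, mem_upShadowWithin, mem_upShadow_iff]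
  constructor
  · rintro ⟨_, ⟨A, hA, x, hx, hxA, rfl⟩, rfl⟩
    exact ⟨A.image g, ⟨A, hA, rfl⟩, g x, by rwa [hg.injOn.mem_finsetImage_iff (h𝒬 A hA) hx],
      (image_insert g x A).symm⟩
  · rintro ⟨_, ⟨A, hA, rfl⟩, m, hm, rfl⟩
    obtain ⟨x, hx, rfl⟩ := hg.surjOn (Set.mem_univ m)
    exact ⟨insert x A, ⟨A, hA, x, hx, fun h => hm (mem_image_of_mem g h), rfl⟩,
      image_insert g x A⟩

lemma isInitSeg_compls_image (hg : Set.BijOn g Y Set.univ)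
    (hgr : ∀ a ∈ Y, ∀ b ∈ Y, r a b → g b < g a) {e : ℕ} {L : Finset (Finset α)}
    (hL : IsLexSegmentFamily r Y e L) : IsInitSeg (L.image (image g))ᶜˢ (n - e) := by
  have hY : #Y = n := by
    simpa using card_nbij g (t := univ) (fun _ _ => mem_univ _) hg.injOn (by simpa using hg.surjOn)
  have hcard : ∀ {A}, A ⊆ Y → #(A.image g) = #A := fun hA => card_image_of_injOn (hg.injOn.mono hA)
  refine ⟨forall_mem_compls.2 ?_, fun s t hs ⟨hts, ht⟩ => ?_⟩
  · simp only [forall_mem_image]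
    intro B hB
    obtain ⟨hBY, hBe⟩ := hL.1 B hB
    rw [card_compl, Fintype.card_fin, hcard hBY, hBe]
  · obtain ⟨B, hB, hBs⟩ := mem_image.1 (mem_compls.1 hs)
    obtain ⟨hBY, hBe⟩ := hL.1 B hB
    set A := {x ∈ Y | g x ∈ tᶜ}
    have hAt : A.image g = tᶜ := image_filter_mem_eq (hg.surjOn.mono subset_rfl (Set.subset_univ _))
    have hAY : A ⊆ Y := filter_subset _ _
    have hAe : #A = e := by
      have := card_le_card hBY
      rw [← hcard hAY, hAt, card_compl, Fintype.card_fin, ht]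
      omega
    have hlex : lexLT r A B := by
      refine lexLT_of_toColex_image_lt hg.injOn hgr hAY hBY ?_
      rwa [hBs, hAt, toColex_compl_lt_toColex_compl]
    exact mem_compls.2 (mem_image.2 ⟨A, hL.2 B hB A hAY hAe hlex, hAt⟩)

end Transport

theorem card_upShadowWithin_le_of_isLexSegmentFamily {α : Type*} [DecidableEq α] {Y : Finset α}
    {r : α → α → Prop} (hr : IsLinearOrderOn r Y) {e : ℕ} {L ℬ : Finset (Finset α)}
    (hL : IsLexSegmentFamily r Y e L) (hℬ : ∀ B ∈ ℬ, B ⊆ Y ∧ #B = e) (hcard : #L ≤ #ℬ) :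
    #(upShadowWithin Y L) ≤ #(upShadowWithin Y ℬ) := by
  rcases Y.eq_empty_or_nonempty with rfl | hY
  · simp
  obtain ⟨g, hg, hgr⟩ := hr.exists_bijOn_fin hY
  have himage : ∀ 𝒬 : Finset (Finset α), (∀ A ∈ 𝒬, A ⊆ Y) → #(𝒬.image (image g)) = #𝒬 :=
    fun 𝒬 h𝒬 => card_image_of_injOn fun A hA B hB =>
      image_injOn_powerset_of_injOn hg.injOn (by simpa using h𝒬 A hA) (by simpa using h𝒬 B hB)
  have hshadow : ∀ 𝒬 : Finset (Finset α), (∀ A ∈ 𝒬, A ⊆ Y) →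
      #(upShadowWithin Y 𝒬) = #(∂⁺ (𝒬.image (image g))) := fun 𝒬 h𝒬 => by
    rw [← image_upShadowWithin hg h𝒬, himage _ fun _ => subset_of_mem_upShadowWithin h𝒬]
  rw [hshadow L fun B hB => (hL.1 B hB).1, hshadow ℬ fun B hB => (hℬ B hB).1]
  refine card_upShadow_le_of_isInitSeg_compls (e := e) ?_ ?_ (isInitSeg_compls_image hg hgr hL)
  · simp only [Set.Sized, coe_image, Set.forall_mem_image]
    intro B hB
    rw [card_image_of_injOn (hg.injOn.mono (hℬ B hB).1), (hℬ B hB).2]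
  · rwa [himage L fun B hB => (hL.1 B hB).1, himage ℬ fun B hB => (hℬ B hB).1]

end Finset

lemma Set.finite_of_forall_subset_finset {α : Type*} {X : Finset α} {𝒜 : Set (Finset α)}
    (h : ∀ A ∈ 𝒜, A ⊆ X) : 𝒜.Finite :=
  X.powerset.finite_toSet.subset fun A hA => Finset.mem_powerset.2 (h A hA)

section Gotzmann

variable {α : Type*} [DecidableEq α]

lemma decompZero_coe (i : α) (𝒜 : Finset (Finset α)) :
    decompZero i ↑𝒜 = ↑(𝒜.nonMemberSubfamily i) := by
  ext B
  simp [decompZero]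

lemma decompOne_coe (i : α) (𝒜 : Finset (Finset α)) :
    decompOne i ↑𝒜 = ↑(𝒜.memberSubfamily i) := by
  ext B
  simp [decompOne, memberSubfamily, eq_comm, and_assoc]

lemma IsGotzmannFamily.card_upShadowWithin_le {X : Finset α} {d : ℕ} {𝒜 : Finset (Finset α)}
    (hG : IsGotzmannFamily X d ↑𝒜) {ℬ : Finset (Finset α)} (hℬ : ∀ B ∈ ℬ, B ⊆ X ∧ #B = d)
    (hcard : #ℬ = #𝒜) : #(upShadowWithin X 𝒜) ≤ #(upShadowWithin X ℬ) := by
  simpa only [← coe_upShadowWithin, Set.ncard_coe_finset] using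
    hG.2 ℬ hℬ (by simpa only [Set.ncard_coe_finset] using hcard)

theorem IsGotzmannFamily.upShadowWithin_memberSubfamily_subset {X : Finset α} {d : ℕ}
    {𝒜 : Finset (Finset α)} {i : α} (hi : i ∈ X) (hG : IsGotzmannFamily X d ↑𝒜)
    {r : α → α → Prop} (hr : IsLinearOrderOn r (X.erase i)) {L₀ L₁ : Finset (Finset α)}
    (hL₀ : IsLexSegmentFamily r (X.erase i) d ↑L₀) (hL₀c : #L₀ = #(𝒜.nonMemberSubfamily i))
    (hL₁ : ∀ B ∈ L₁, B ⊆ X.erase i ∧ #B = d - 1) (hL₁c : #L₁ = #(𝒜.memberSubfamily i))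
    (hsub : upShadowWithin (X.erase i) L₁ ⊆ L₀) :
    upShadowWithin (X.erase i) (𝒜.memberSubfamily i) ⊆ 𝒜.nonMemberSubfamily i := by
  rcases (𝒜.memberSubfamily i).eq_empty_or_nonempty with h𝒜₁ | ⟨S, hS⟩
  · simp [h𝒜₁]
  have hd : #S + 1 = d := by
    rw [mem_memberSubfamily] at hS
    rw [← card_insert_of_notMem hS.2]
    exact (hG.1 _ hS.1).2
  have hi₀ : ∀ B ∈ L₀, i ∉ B := fun B hB h => notMem_erase i X ((hL₀.1 B hB).1 h)
  have hi₁ : ∀ B ∈ L₁, i ∉ B := fun B hB h => notMem_erase i X ((hL₁ B hB).1 h)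
  set 𝒞 := L₀ ∪ L₁.image (insert i)
  have h𝒞₀ : 𝒞.nonMemberSubfamily i = L₀ := nonMemberSubfamily_union_image_insert_s14 hi₀
  have h𝒞₁ : 𝒞.memberSubfamily i = L₁ := memberSubfamily_union_image_insert_s14 hi₀ hi₁
  have h𝒞 : ∀ B ∈ 𝒞, B ⊆ X ∧ #B = d := by
    intro B hB
    rcases mem_union.1 hB with hB | hB
    · exact ⟨(hL₀.1 B hB).1.trans (erase_subset i X), (hL₀.1 B hB).2⟩
    · obtain ⟨T, hT, rfl⟩ := mem_image.1 hB
      refine ⟨insert_subset hi ((hL₁ T hT).1.trans (erase_subset i X)), ?_⟩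
      rw [card_insert_of_notMem (hi₁ T hT), (hL₁ T hT).2]
      omega
  have h𝒜₀ : ∀ B ∈ 𝒜.nonMemberSubfamily i, B ⊆ X.erase i ∧ #B = d := by
    intro B hB
    rw [mem_nonMemberSubfamily] at hB
    exact ⟨subset_erase.2 ⟨(hG.1 B hB.1).1, hB.2⟩, (hG.1 B hB.1).2⟩
  have hGotzmann := hG.card_upShadowWithin_le h𝒞 (by
    rw [← card_memberSubfamily_add_card_nonMemberSubfamily i 𝒞,
      ← card_memberSubfamily_add_card_nonMemberSubfamily i 𝒜, h𝒞₀, h𝒞₁, hL₀c, hL₁c])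
  have hKK := card_upShadowWithin_le_of_isLexSegmentFamily hr hL₀ h𝒜₀ hL₀c.le
  rw [card_upShadowWithin_eq hi, card_upShadowWithin_eq hi, h𝒞₀, h𝒞₁, union_eq_left.2 hsub]
    at hGotzmann
  have hcard : #(𝒜.nonMemberSubfamily i ∪ upShadowWithin (X.erase i) (𝒜.memberSubfamily i)) ≤
      #(𝒜.nonMemberSubfamily i) := by omega
  exact union_eq_left.1 (eq_of_subset_of_card_le subset_union_left hcard).symm

end Gotzmann

/-- **Lemma (exchange property).** Let `𝒜` be Gotzmann in `X`, `i ∈ X`, and let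
`L₀, L₁` be the lex segments (for a linear order on `X \ {i}`) with the same
cardinalities as the parts `𝒜₀, 𝒜₁` of the `i`-decomposition of `𝒜`.  If
`∂⁺L₁ ⊆ L₀`, then for every `A ∈ 𝒜` with `i ∈ A` and every `j ∈ X \ A`, the set
`(A \ {i}) ∪ {j}` belongs to `𝒜`. -/
theorem exchange_of_shadow_le {α : Type*} [DecidableEq α]
    (X : Finset α) (d : ℕ) (𝒜 : Set (Finset α)) (i : α) (hi : i ∈ X)
    (hG : IsGotzmannFamily X d 𝒜)
    (r : α → α → Prop) (hr : IsLinearOrderOn r (X.erase i))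
    (L₀ L₁ : Set (Finset α))
    (hL₀ : IsLexSegmentFamily r (X.erase i) d L₀)
    (hL₀c : L₀.ncard = (decompZero i 𝒜).ncard)
    (hL₁ : IsLexSegmentFamily r (X.erase i) (d - 1) L₁)
    (hL₁c : L₁.ncard = (decompOne i 𝒜).ncard)
    (hsub : upShadowIn (X.erase i) L₁ ⊆ L₀) :
    ∀ A ∈ 𝒜, i ∈ A → ∀ j ∈ X, j ∉ A → insert j (A.erase i) ∈ 𝒜 := by
  obtain ⟨𝒜, rfl⟩ :=
    (Set.finite_of_forall_subset_finset fun A hA => (hG.1 A hA).1).exists_finset_coe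
  obtain ⟨L₀, rfl⟩ :=
    (Set.finite_of_forall_subset_finset fun B hB => (hL₀.1 B hB).1).exists_finset_coe
  obtain ⟨L₁, rfl⟩ :=
    (Set.finite_of_forall_subset_finset fun B hB => (hL₁.1 B hB).1).exists_finset_coe
  rw [decompZero_coe, Set.ncard_coe_finset, Set.ncard_coe_finset] at hL₀c
  rw [decompOne_coe, Set.ncard_coe_finset, Set.ncard_coe_finset] at hL₁c
  rw [← coe_upShadowWithin, coe_subset] at hsub
  have key := hG.upShadowWithin_memberSubfamily_subset hi hr hL₀ hL₀c hL₁.1 hL₁c hsub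
  intro A hA hiA j hjX hjA
  rcases eq_or_ne j i with rfl | hji
  · rwa [insert_erase hiA]
  have hA₁ : A.erase i ∈ 𝒜.memberSubfamily i :=
    mem_memberSubfamily.2 ⟨by rwa [insert_erase hiA], notMem_erase i A⟩
  exact (mem_nonMemberSubfamily.1 (key (mem_upShadowWithin.2
    ⟨_, hA₁, j, mem_erase.2 ⟨hji, hjX⟩, fun h => hjA (mem_of_mem_erase h), rfl⟩))).1
end
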